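/- arXiv:1301.1718 — 13 statements merged into one kernel-verified Lean document; each statement's English description precedes it below -/
import Mathlib

section
/- Let r be an odd prime. With γ, m, u, v, η as in the setup, if the minimal polynomial P of η over ℚ has degree at most r, then P = X^r − γ^r or P = X^r + γ^r. -/
/-!
Write `η = γζ` with `ζ` a root of unity. Some power of `η` is rational, so every conjugate
of `η` has absolute value `γ`, and the constant coefficient of `P` shows that `γ ^ deg P` is
rational. As `γ` is irrational and `γ ^ r` rational, Bézout forces `r ∣ deg P`, so `deg P = r`.
The root of unity `ζ ^ r = η ^ r / γ ^ r` lies in `ℚ(η)`, so the degree `φ(k)` of its minimal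
polynomial, `k` its order, divides the odd number `r`; since `φ(k)` is even for `k > 2`,
`ζ ^ r = ±1`, and `P` is the monic polynomial `X ^ r ∓ γ ^ r` of degree `r` vanishing at `η`.
-/

open Polynomial

theorem Irrational.prime_dvd_of_pow_eq_ratCast {x : ℝ} (hx : Irrational x) {p d : ℕ}
    (hp : p.Prime) {a b : ℚ} (ha : x ^ p = a) (hb : x ^ d = b) : p ∣ d := by
  by_contra hpd
  have hbezout : (1 : ℤ) = p * p.gcdA d + d * p.gcdB d := by
    rw [← Nat.gcd_eq_gcd_ab, (Nat.coprime_comm.mp ((hp.coprime_iff_not_dvd).mpr hpd)).symm]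
    simp
  refine hx ⟨a ^ p.gcdA d * b ^ p.gcdB d, ?_⟩
  push_cast
  rw [← ha, ← hb, ← zpow_natCast x p, ← zpow_natCast x d, ← zpow_mul, ← zpow_mul,
    ← zpow_add₀ hx.ne_zero, ← hbezout, zpow_one]

theorem norm_eq_of_mem_aroots_minpoly {η : ℂ} {N : ℕ} (hN : N ≠ 0) {c : ℚ}
    (hc : η ^ N = c) {z : ℂ} (hz : z ∈ (minpoly ℚ η).aroots ℂ) : ‖z‖ = ‖η‖ := by
  obtain ⟨f, hf⟩ : minpoly ℚ η ∣ X ^ N - C c := minpoly.dvd ℚ η (by simp [hc])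
  have hzN : z ^ N = η ^ N := by
    have h := congrArg (aeval z) hf
    simp only [(mem_aroots.mp hz).2, map_sub, map_pow, aeval_X, aeval_C, eq_ratCast, map_mul,
      zero_mul, sub_eq_zero] at h
    rw [h, hc]
  exact (pow_left_inj₀ (norm_nonneg z) (norm_nonneg η) hN).mp (by simp only [← norm_pow, hzN])

theorem Polynomial.Monic.pow_natDegree_eq_abs_coeff_zero {p : ℚ[X]} (hp : p.Monic) {ρ : ℝ}
    (hρ : ∀ z ∈ p.aroots ℂ, ‖z‖ = ρ) : ρ ^ p.natDegree = |(p.coeff 0 : ℝ)| := by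
  have hsplit : (p.map (algebraMap ℚ ℂ)).Splits := IsAlgClosed.splits _
  have hcoeff := hsplit.coeff_zero_eq_prod_roots_of_monic (hp.map _)
  have hcard : (p.aroots ℂ).card = p.natDegree := by
    rw [aroots_def, splits_iff_card_roots.mp hsplit, Polynomial.natDegree_map]
  have hnorms : (p.aroots ℂ).map (‖·‖) = Multiset.replicate p.natDegree ρ := by
    refine Multiset.eq_replicate.mpr ⟨by rw [Multiset.card_map, hcard], fun x hx => ?_⟩
    obtain ⟨z, hz, rfl⟩ := Multiset.mem_map.mp hx
    exact hρ z hz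
  rw [coeff_map, eq_ratCast, ← aroots_def] at hcoeff
  have := congrArg (‖·‖) hcoeff
  simp only [norm_mul, norm_pow, norm_neg, norm_one, one_pow, one_mul,
    Complex.norm_ratCast] at this
  rw [this, ← Multiset.prod_replicate, ← hnorms]
  exact (map_multiset_prod (normHom : ℂ →*₀ ℝ) _).symm

open IntermediateField in
theorem minpoly.natDegree_dvd_of_mem_adjoin_simple {K L : Type*} [Field K] [Field L]
    [Algebra K L] {x y : L} (hx : IsIntegral K x) (hy : y ∈ K⟮x⟯) :
    (minpoly K y).natDegree ∣ (minpoly K x).natDegree := by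
  have : FiniteDimensional K K⟮x⟯ := adjoin.finiteDimensional hx
  rw [← adjoin.finrank hx, show y = algebraMap K⟮x⟯ L ⟨y, hy⟩ from rfl,
    minpoly.algebraMap_eq (algebraMap K⟮x⟯ L).injective]
  exact minpoly.degree_dvd (.of_finite K _)

theorem IsOfFinOrder.eq_one_or_eq_neg_one_of_odd_natDegree_minpoly {K : Type*} [Field K]
    [CharZero K] {ω : K} (hω : IsOfFinOrder ω) (hodd : Odd (minpoly ℚ ω).natDegree) :
    ω = 1 ∨ ω = -1 := by
  rw [← cyclotomic_eq_minpoly_rat (IsPrimitiveRoot.orderOf ω) hω.orderOf_pos,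
    natDegree_cyclotomic, Nat.odd_totient_iff_eq_one] at hodd
  exact sq_eq_one_iff.mp <|
    orderOf_dvd_iff_pow_eq_one.mp (Nat.dvd_two_of_totient_le_one hω.orderOf_pos hodd.le)

theorem minpoly.eq_X_pow_sub_C_of_pow_eq {K A : Type*} [Field K] [Ring A] [Algebra K A] {x : A}
    {n : ℕ} (hn : n ≠ 0) {c : K} (hx : x ^ n = algebraMap K A c)
    (hdeg : n ≤ (minpoly K x).natDegree) : minpoly K x = X ^ n - C c := by
  have hmonic := monic_X_pow_sub_C c hn
  have hroot : Polynomial.aeval x (X ^ n - C c) = 0 := by simp [hx]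
  refine (eq_of_monic_of_dvd_of_natDegree_le (minpoly.monic ⟨_, hmonic, ?_⟩)
    hmonic (minpoly.dvd K x hroot) (by rwa [natDegree_X_pow_sub_C])).symm
  rwa [← Polynomial.aeval_def]

theorem Complex.isOfFinOrder_exp_two_pi_I_mul_div (a b : ℤ) :
    IsOfFinOrder (exp (2 * Real.pi * I * a / b)) := by
  have h := (isPrimitiveRoot_exp_rat (a / b)).isOfFinOrder (Rat.den_nz _)
  push_cast at h
  rwa [mul_div_assoc]

section OfRealMulRootOfUnity

variable {γ : ℝ} {r : ℕ} {q : ℚ} {ζ : ℂ}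

theorem exists_pow_ofReal_mul_eq_ratCast (hr : r ≠ 0) (hq : γ ^ r = q) (hζ : IsOfFinOrder ζ) :
    ∃ N ≠ 0, ∃ c : ℚ, ((γ : ℂ) * ζ) ^ N = c := by
  obtain ⟨n, hn, hζn⟩ := isOfFinOrder_iff_pow_eq_one.mp hζ
  refine ⟨r * n, Nat.mul_ne_zero hr hn.ne', q ^ n, ?_⟩
  rw [mul_pow, pow_mul, mul_comm r n, pow_mul ζ, hζn, one_pow, mul_one]
  exact_mod_cast congrArg (· ^ n) hq

theorem isIntegral_ofReal_mul (hr : r ≠ 0) (hq : γ ^ r = q) (hζ : IsOfFinOrder ζ) :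
    IsIntegral ℚ ((γ : ℂ) * ζ) := by
  obtain ⟨N, hN, c, hc⟩ := exists_pow_ofReal_mul_eq_ratCast hr hq hζ
  exact .of_pow (Nat.pos_of_ne_zero hN) (hc ▸ isIntegral_algebraMap)

theorem prime_dvd_natDegree_minpoly_ofReal_mul (hγpos : 0 < γ) (hγirr : Irrational γ)
    (hr : r.Prime) (hq : γ ^ r = q) (hζ : IsOfFinOrder ζ) :
    r ∣ (minpoly ℚ ((γ : ℂ) * ζ)).natDegree := by
  obtain ⟨N, hN, c, hc⟩ := exists_pow_ofReal_mul_eq_ratCast hr.ne_zero hq hζ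
  have hnorm : ‖(γ : ℂ) * ζ‖ = γ := by
    rw [norm_mul, hζ.norm_eq_one, mul_one, Complex.norm_of_nonneg hγpos.le]
  refine hγirr.prime_dvd_of_pow_eq_ratCast hr hq
    (b := |(minpoly ℚ ((γ : ℂ) * ζ)).coeff 0|) ?_
  rw [Rat.cast_abs,
    ← (minpoly.monic (isIntegral_ofReal_mul hr.ne_zero hq hζ)).pow_natDegree_eq_abs_coeff_zero]
  exact fun z hz => (norm_eq_of_mem_aroots_minpoly hN hc hz).trans hnorm

end OfRealMulRootOfUnity

theorem stmt_2_general (r : ℕ) (hrp : r.Prime) (hodd : Odd r)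
    (m : ℕ) (u v : ℤ)
    (γ : ℝ) (hγpos : 0 < γ) (hγirr : Irrational γ) (hγr : ∃ q : ℚ, γ ^ r = (q : ℝ))
    (η : ℂ)
    (hη : η = (γ : ℂ) *
      Complex.exp (2 * (Real.pi : ℂ) * Complex.I * (v : ℂ) / ((r : ℂ) ^ m * (u : ℂ))))
    (hdeg : (minpoly ℚ η).natDegree ≤ r) :
    (minpoly ℚ η).map (algebraMap ℚ ℂ) = X ^ r - Polynomial.C ((γ : ℂ) ^ r) ∨
    (minpoly ℚ η).map (algebraMap ℚ ℂ) = X ^ r + Polynomial.C ((γ : ℂ) ^ r) := by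
  obtain ⟨q, hq⟩ := hγr
  set ζ := Complex.exp (2 * (Real.pi : ℂ) * Complex.I * (v : ℂ) / ((r : ℂ) ^ m * (u : ℂ)))
  have hζ : IsOfFinOrder ζ := by
    simpa using Complex.isOfFinOrder_exp_two_pi_I_mul_div v (r ^ m * u)
  have hqγ : (γ : ℂ) ^ r = q := by exact_mod_cast hq
  have hηr : η ^ r = q * ζ ^ r := by rw [hη, mul_pow, hqγ]
  have hint : IsIntegral ℚ η := hη ▸ isIntegral_ofReal_mul hrp.ne_zero hq hζ
  have hdeg_eq : (minpoly ℚ η).natDegree = r :=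
    le_antisymm hdeg <| Nat.le_of_dvd (minpoly.natDegree_pos hint)
      (hη ▸ prime_dvd_natDegree_minpoly_ofReal_mul hγpos hγirr hrp hq hζ)
  have hζr_mem : ζ ^ r ∈ IntermediateField.adjoin ℚ {η} := by
    have hq0 : (q : ℂ) ≠ 0 := hqγ ▸ pow_ne_zero _ (by exact_mod_cast hγpos.ne')
    rw [show ζ ^ r = η ^ r * ((q : ℚ) : ℂ)⁻¹ by rw [hηr]; field_simp]
    exact mul_mem (pow_mem (IntermediateField.mem_adjoin_simple_self ℚ η) r)
      (inv_mem (IntermediateField.algebraMap_mem _ q))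
  rcases hζ.pow.eq_one_or_eq_neg_one_of_odd_natDegree_minpoly (hodd.of_dvd_nat
      (hdeg_eq ▸ minpoly.natDegree_dvd_of_mem_adjoin_simple hint hζr_mem)) with h | h
  · left
    rw [minpoly.eq_X_pow_sub_C_of_pow_eq hrp.ne_zero (c := q) (by simp [hηr, h]) hdeg_eq.ge]
    simp [hqγ]
  · right
    rw [minpoly.eq_X_pow_sub_C_of_pow_eq hrp.ne_zero (c := -q) (by simp [hηr, h]) hdeg_eq.ge]
    simp [hqγ, sub_eq_add_neg]

/-- Let `r` be an odd prime, `m ≥ 0`, and `u ≥ 1`, `v` integers with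
`gcd(u,v) = gcd(r,u) = gcd(r,v) = 1`.  Let `γ` be a positive irrational real with
`γ^r ∈ ℚ`, and `η := γ · exp(2π√−1·v/(r^m·u))`.  If the minimal polynomial `P` of `η`
over `ℚ` has degree at most `r`, then `P = X^r − γ^r` or `P = X^r + γ^r`. -/
theorem stmt_2 (r : ℕ) (hrp : r.Prime) (hodd : Odd r)
    (m : ℕ) (u v : ℤ) (hu : 1 ≤ u)
    (huv : Int.gcd u v = 1) (hru : Int.gcd (r : ℤ) u = 1) (hrv : Int.gcd (r : ℤ) v = 1)
    (γ : ℝ) (hγpos : 0 < γ) (hγirr : Irrational γ) (hγr : ∃ q : ℚ, γ ^ r = (q : ℝ))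
    (η : ℂ)
    (hη : η = (γ : ℂ) *
      Complex.exp (2 * (Real.pi : ℂ) * Complex.I * (v : ℂ) / ((r : ℂ) ^ m * (u : ℂ))))
    (hdeg : (minpoly ℚ η).natDegree ≤ r) :
    (minpoly ℚ η).map (algebraMap ℚ ℂ) = X ^ r - Polynomial.C ((γ : ℂ) ^ r) ∨
    (minpoly ℚ η).map (algebraMap ℚ ℂ) = X ^ r + Polynomial.C ((γ : ℂ) ^ r) :=
  stmt_2_general r hrp hodd m u v γ hγpos hγirr hγr η hη hdeg
end

section
/- Let r = 2 and assume (u,m) ∉ {(1,3), (3,2)}. With γ, m, u, v, η as in the setup, if the minimal polynomial P of η over ℚ has degree at most 2, then P = X² − γ² or P = X² + γ². -/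
/-!
Write `η = γ ζ` with `ζ` a primitive `2^m u`-th root of unity and `γ² = q`, and let
`P = X² + bX + c`. Since `|η|² = q` is not the square of a rational, `η ∉ ℚ` and `P` has degree
exactly `2`. If `η` is real, `bη` is rational, which forces `b = 0`. Otherwise `b = -2γ Re ζ`, so
`(ζ + ζ⁻¹)² = b²/q` is a rational algebraic integer in `(0, 4)` other than `1`; the values `2` and
`3` make `ζ` a primitive root of order `8` or `12`, the excluded cases. So `b = 0`, and then
`η² = -c` with `|η²| = q` gives `c = ±q`.
-/

open Polynomial Complex

lemma Nat.two_pow_mul_odd_inj {m n a b : ℕ} (ha : Odd a) (hb : Odd b)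
    (h : 2 ^ m * a = 2 ^ n * b) : m = n ∧ a = b := by
  have hval : ∀ k c : ℕ, Odd c → padicValNat 2 (2 ^ k * c) = k := fun k c hc ↦ by
    rw [padicValNat.mul (by positivity) hc.pos.ne', padicValNat.prime_pow,
      padicValNat.eq_zero_of_not_dvd hc.not_two_dvd_nat, add_zero]
  obtain rfl : m = n := by rw [← hval m a ha, h, hval n b hb]
  exact ⟨rfl, Nat.eq_of_mul_eq_mul_left (by positivity) h⟩

lemma Irrational.not_isSquare_of_sq_eq {x : ℝ} (hx : Irrational x) {q : ℚ} (hq : x ^ 2 = q) :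
    ¬ IsSquare q := by
  rintro ⟨r, rfl⟩
  push_cast at hq
  rcases sq_eq_sq_iff_eq_or_eq_neg.mp (hq.trans (sq _).symm) with h | h
  · exact hx.ne_rat r h
  · exact hx.ne_rat (-r) (by push_cast; exact h)

lemma Polynomial.Monic.eq_X_sq_add_C_mul_X_add_C {R : Type*} [CommSemiring R] {p : R[X]}
    (hp : p.Monic) (h2 : p.natDegree = 2) :
    p = X ^ 2 + C (p.coeff 1) * X + C (p.coeff 0) := by
  conv_lhs => rw [hp.as_sum, h2]
  simp only [Finset.sum_range_succ, Finset.range_one, Finset.sum_singleton, pow_zero, mul_one,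
    pow_one]
  ring

lemma minpoly.sq_add_mul_add_eq_zero {K L : Type*} [Field K] [CommRing L] [Algebra K L] {x : L}
    (hx : IsIntegral K x) (h2 : (minpoly K x).natDegree = 2) :
    x ^ 2 + algebraMap K L ((minpoly K x).coeff 1) * x + algebraMap K L ((minpoly K x).coeff 0)
      = 0 := by
  have := minpoly.aeval K x
  rwa [(minpoly.monic hx).eq_X_sq_add_C_mul_X_add_C h2, map_add, map_add, map_mul,
    aeval_X_pow, aeval_X, aeval_C, aeval_C] at this

lemma Complex.eq_neg_two_mul_re_of_sq_add_mul_add_eq_zero {z : ℂ} {b c : ℝ}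
    (h : z ^ 2 + b * z + c = 0) (hz : z.im ≠ 0) : b = -2 * z.re := by
  have him := congrArg im h
  simp only [pow_two, add_im, mul_im, ofReal_re, ofReal_im, zero_mul, add_zero, zero_im] at him
  apply mul_right_cancel₀ hz
  linear_combination him

lemma Complex.notMem_range_ratCast_of_normSq_eq {z : ℂ} {q : ℚ} (hz : normSq z = q)
    (hq : ¬ IsSquare q) : z ∉ (algebraMap ℚ ℂ).range := by
  rintro ⟨r, rfl⟩
  exact hq ⟨r, by exact_mod_cast (by simpa using hz.symm : (q : ℝ) = r * r)⟩

lemma Complex.minpoly_map_eq_X_sq_sub_C_or_X_sq_add_C {z : ℂ} {q : ℚ} (hz : IsIntegral ℚ z)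
    (h2 : (minpoly ℚ z).natDegree = 2) (hq : normSq z = q) (hb : (minpoly ℚ z).coeff 1 = 0) :
    (minpoly ℚ z).map (algebraMap ℚ ℂ) = X ^ 2 - C (q : ℂ) ∨
      (minpoly ℚ z).map (algebraMap ℚ ℂ) = X ^ 2 + C (q : ℂ) := by
  set c := (minpoly ℚ z).coeff 0
  have hroot := minpoly.sq_add_mul_add_eq_zero hz h2
  rw [hb, map_zero, zero_mul, add_zero, eq_ratCast] at hroot
  have hc : c = -q ∨ c = q := by
    have := congrArg normSq (eq_neg_of_add_eq_zero_left hroot)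
    rw [map_pow, hq, normSq_neg, normSq_ratCast] at this
    exact sq_eq_sq_iff_eq_or_eq_neg.mp (by rw [sq]; exact_mod_cast this.symm) |>.symm
  rw [(minpoly.monic hz).eq_X_sq_add_C_mul_X_add_C h2, hb]
  rcases hc with hc | hc
  · left; simp [c, hc, sub_eq_add_neg]
  · right; simp [c, hc]

namespace IsPrimitiveRoot

section Field

variable {K : Type*} [Field K] [CharZero K] {ζ : K} {N : ℕ}

lemma eq_eight_of_add_inv_sq_eq_two (hζ : IsPrimitiveRoot ζ N) (h : (ζ + ζ⁻¹) ^ 2 = 2) :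
    N = 8 := by
  have hζ0 : ζ ≠ 0 := by rintro rfl; norm_num at h
  have h4 : ζ ^ 4 = -1 := by
    field_simp at h
    linear_combination h
  have h8 : N ∣ 8 :=
    hζ.dvd_of_pow_eq_one 8 (by rw [show 8 = 4 * 2 from rfl, pow_mul, h4]; norm_num)
  have hn4 : ¬ N ∣ 4 := by rw [← hζ.pow_eq_one_iff_dvd, h4]; norm_num
  have := Nat.le_of_dvd (by norm_num) h8
  interval_cases N <;> omega

lemma eq_twelve_of_add_inv_sq_eq_three (hζ : IsPrimitiveRoot ζ N) (h : (ζ + ζ⁻¹) ^ 2 = 3) :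
    N = 12 := by
  have hζ0 : ζ ≠ 0 := by rintro rfl; norm_num at h
  have h4 : ζ ^ 4 = ζ ^ 2 - 1 := by
    field_simp at h
    linear_combination h
  have h6 : ζ ^ 6 = -1 := by linear_combination (ζ ^ 2 + 1) * h4
  have h12 : N ∣ 12 :=
    hζ.dvd_of_pow_eq_one 12 (by rw [show 12 = 6 * 2 from rfl, pow_mul, h6]; norm_num)
  have hn6 : ¬ N ∣ 6 := by rw [← hζ.pow_eq_one_iff_dvd, h6]; norm_num
  have hn4 : ¬ N ∣ 4 := by
    rw [← hζ.pow_eq_one_iff_dvd]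
    intro h1
    have h2 : ζ ^ 2 = 2 := by linear_combination h1 - h4
    have : (4 : K) = 1 := by rw [← h1, show ζ ^ 4 = (ζ ^ 2) ^ 2 by ring, h2]; norm_num
    norm_num at this
  have := Nat.le_of_dvd (by norm_num) h12
  interval_cases N <;> omega

lemma exists_intCast_eq_of_add_inv_sq_eq_ratCast (hζ : IsPrimitiveRoot ζ N) (hN : 0 < N)
    {w : ℚ} (hw : (ζ + ζ⁻¹) ^ 2 = w) : ∃ k : ℤ, (k : ℚ) = w := by
  have hint : IsIntegral ℤ (algebraMap ℚ K w) := by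
    rw [eq_ratCast, ← hw]
    exact ((hζ.isIntegral hN).add (hζ.inv.isIntegral hN)).pow 2
  exact IsIntegrallyClosed.isIntegral_iff.mp
    (IsIntegral.tower_bot (algebraMap ℚ K).injective hint)

end Field

section Complex

variable {ζ : ℂ} {N : ℕ}

lemma add_inv_eq_two_mul_re (hζ : IsPrimitiveRoot ζ N) (hN : 0 < N) :
    ζ + ζ⁻¹ = (2 * ζ.re : ℝ) := by
  rw [inv_eq_conj (hζ.norm'_eq_one hN.ne'), add_conj]

lemma re_sq_add_im_sq (hζ : IsPrimitiveRoot ζ N) (hN : 0 < N) : ζ.re ^ 2 + ζ.im ^ 2 = 1 := by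
  have := hζ.norm'_eq_one hN.ne'
  rwa [norm_eq_sqrt_sq_add_sq, Real.sqrt_eq_one] at this

lemma normSq_ofReal_mul (hζ : IsPrimitiveRoot ζ N) (hN : 0 < N) (γ : ℝ) :
    normSq (γ * ζ) = γ ^ 2 := by
  rw [map_mul, normSq_ofReal, normSq_eq_norm_sq, hζ.norm'_eq_one hN.ne']
  ring

lemma isIntegral_ofReal_mul (hζ : IsPrimitiveRoot ζ N) (hN : 0 < N) {γ : ℝ} {q : ℚ}
    (hγ : γ ^ 2 = q) : IsIntegral ℚ ((γ : ℂ) * ζ) := by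
  refine .mul (.of_pow two_pos ?_) (hζ.isIntegral hN).tower_top
  rw [← ofReal_pow, hγ, ofReal_ratCast, ← eq_ratCast (algebraMap ℚ ℂ)]
  exact isIntegral_algebraMap

lemma eq_eight_or_twelve_of_sq_eq_mul_re_sq (hζ : IsPrimitiveRoot ζ N) (hN : 0 < N)
    (him : ζ.im ≠ 0) {q b : ℚ} (hq : ¬ IsSquare q) (hb : (b : ℝ) ^ 2 = q * (2 * ζ.re) ^ 2)
    (hb0 : b ≠ 0) : N = 8 ∨ N = 12 := by
  have hq0 : (q : ℝ) ≠ 0 := by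
    rintro h
    exact hq ⟨0, by exact_mod_cast h.trans (mul_zero 0).symm⟩
  have hre : (2 * ζ.re) ^ 2 = ((b ^ 2 / q : ℚ) : ℝ) := by
    push_cast
    rw [hb]
    field_simp
  obtain ⟨k, hk⟩ := hζ.exists_intCast_eq_of_add_inv_sq_eq_ratCast hN (w := b ^ 2 / q) (by
    rw [hζ.add_inv_eq_two_mul_re hN, ← ofReal_pow, hre]; norm_cast)
  have hkre : (k : ℝ) = (2 * ζ.re) ^ 2 := by rw [hre, ← hk]; norm_cast
  have hk0 : 0 < k := by
    have : ζ.re ≠ 0 := by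
      rintro h
      have : (b : ℝ) ^ 2 = 0 := by rw [hb, h]; ring
      exact hb0 (by exact_mod_cast pow_eq_zero_iff two_ne_zero |>.mp this)
    exact_mod_cast (show (0 : ℝ) < k by rw [hkre]; positivity)
  have hk4 : k < 4 := by
    have := pow_pos (abs_pos.mpr him) 2
    exact_mod_cast (show (k : ℝ) < 4 by
      rw [hkre]; nlinarith [sq_abs ζ.im, hζ.re_sq_add_im_sq hN])
  have hk1 : k ≠ 1 := by
    rintro rfl
    exact hq ⟨b, by exact_mod_cast (show (q : ℝ) = b * b by rw [← sq, hb, ← hkre]; simp)⟩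
  interval_cases k
  · exact absurd rfl hk1
  · left
    exact hζ.eq_eight_of_add_inv_sq_eq_two (by
      rw [hζ.add_inv_eq_two_mul_re hN, ← ofReal_pow, ← hkre]; norm_num)
  · right
    exact hζ.eq_twelve_of_add_inv_sq_eq_three (by
      rw [hζ.add_inv_eq_two_mul_re hN, ← ofReal_pow, ← hkre]; norm_num)

lemma eq_zero_of_ofReal_mul_sq_add_mul_add_eq_zero (hζ : IsPrimitiveRoot ζ N) (hN : 0 < N)
    (h8 : N ≠ 8) (h12 : N ≠ 12) {γ : ℝ} {q b c : ℚ} (hγ : γ ^ 2 = q) (hq : ¬ IsSquare q)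
    (h : ((γ : ℂ) * ζ) ^ 2 + b * ((γ : ℂ) * ζ) + c = 0) : b = 0 := by
  by_contra hb0
  have hnorm := hζ.re_sq_add_im_sq hN
  by_cases him : ζ.im = 0
  · -- `ζ = ±1`, and the real part of `h` makes `γ ζ = -(q + c) / b` rational
    have hre := congrArg re h
    simp only [pow_two, add_re, mul_re, ofReal_re, ofReal_im,
      mul_im, ratCast_re, ratCast_im, zero_re, him, mul_zero,
      zero_mul, sub_zero, add_zero] at hre
    have hγre : γ * ζ.re = ((-(q + c) / b : ℚ) : ℝ) := by
      push_cast
      rw [eq_div_iff (by exact_mod_cast hb0)]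
      linear_combination hre - hγ - γ ^ 2 * hnorm + γ ^ 2 * ζ.im * him
    refine hq ⟨-(q + c) / b, ?_⟩
    exact_mod_cast (show (q : ℝ) = ((-(q + c) / b : ℚ) : ℝ) * ((-(q + c) / b : ℚ) : ℝ) by
      rw [← hγre]; linear_combination -hγ - γ ^ 2 * hnorm + γ ^ 2 * ζ.im * him)
  · have hγ0 : γ ≠ 0 := by
      rintro rfl
      exact hq ⟨0, by exact_mod_cast (show (q : ℝ) = 0 * 0 by rw [← hγ]; ring)⟩
    have hb := eq_neg_two_mul_re_of_sq_add_mul_add_eq_zero (b := b) (c := c)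
      (by exact_mod_cast h) (by simpa using ⟨hγ0, him⟩)
    rw [re_ofReal_mul] at hb
    have := hζ.eq_eight_or_twelve_of_sq_eq_mul_re_sq hN him hq (by rw [hb, ← hγ]; ring) hb0
    omega

end Complex

end IsPrimitiveRoot

theorem stmt_3_general (m : ℕ) (u v : ℤ) (hu : 1 ≤ u)
    (huv : Int.gcd u v = 1) (h2u : Int.gcd 2 u = 1) (h2v : Int.gcd 2 v = 1)
    (hexc : ¬((u = 1 ∧ m = 3) ∨ (u = 3 ∧ m = 2)))
    (γ : ℝ) (hγirr : Irrational γ) (hγr : ∃ q : ℚ, γ ^ 2 = (q : ℝ))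
    (η : ℂ)
    (hη : η = (γ : ℂ) *
      Complex.exp (2 * (Real.pi : ℂ) * Complex.I * (v : ℂ) / ((2 : ℂ) ^ m * (u : ℂ))))
    (hdeg : (minpoly ℚ η).natDegree ≤ 2) :
    (minpoly ℚ η).map (algebraMap ℚ ℂ) = X ^ 2 - Polynomial.C ((γ : ℂ) ^ 2) ∨
    (minpoly ℚ η).map (algebraMap ℚ ℂ) = X ^ 2 + Polynomial.C ((γ : ℂ) ^ 2) := by
  lift u to ℕ using by omega
  obtain ⟨q, hq⟩ := hγr
  have hodd : Odd u := Nat.coprime_two_left.mp (by exact_mod_cast h2u)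
  have hN : 0 < 2 ^ m * u := Nat.mul_pos (by positivity) hodd.pos
  have hζ := isPrimitiveRoot_exp_of_isCoprime v (2 ^ m * u) hN.ne' (by
    push_cast
    exact ((Int.isCoprime_iff_gcd_eq_one.mpr h2v).pow_left.mul_left
      (Int.isCoprime_iff_gcd_eq_one.mpr huv)).symm)
  set ζ := exp (2 * Real.pi * I * (v / (2 ^ m * u : ℕ)))
  obtain rfl : η = γ * ζ := by rw [hη]; congr 2; push_cast; ring
  have hsq := hγirr.not_isSquare_of_sq_eq hq
  have hint := hζ.isIntegral_ofReal_mul hN hq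
  have hnormSq := (hζ.normSq_ofReal_mul hN γ).trans hq
  have hd2 := le_antisymm hdeg ((minpoly.two_le_natDegree_iff hint).2
    (notMem_range_ratCast_of_normSq_eq hnormSq hsq))
  have hb := hζ.eq_zero_of_ofReal_mul_sq_add_mul_add_eq_zero hN
    (fun h ↦ hexc (Or.inl (by
      have := Nat.two_pow_mul_odd_inj (n := 3) hodd odd_one (h.trans rfl); omega)))
    (fun h ↦ hexc (Or.inr (by
      have := Nat.two_pow_mul_odd_inj (n := 2) hodd (by decide : Odd 3) (h.trans rfl); omega)))
    hq hsq (by simpa using minpoly.sq_add_mul_add_eq_zero hint hd2)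
  rw [show (γ : ℂ) ^ 2 = q by exact_mod_cast hq]
  exact minpoly_map_eq_X_sq_sub_C_or_X_sq_add_C hint hd2 hnormSq hb

/-- Take `r = 2` in the setup: `m ≥ 0`, `u ≥ 1`, `v` integers with
`gcd(u,v) = gcd(2,u) = gcd(2,v) = 1`, `γ` a positive irrational real with `γ² ∈ ℚ`,
and `η := γ · exp(2π√−1·v/(2^m·u))`.  Assume `(u,m) ∉ {(1,3), (3,2)}`.  If the
minimal polynomial `P` of `η` over `ℚ` has degree at most `2`, then `P = X² − γ²` or
`P = X² + γ²`. -/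
theorem stmt_3 (m : ℕ) (u v : ℤ) (hu : 1 ≤ u)
    (huv : Int.gcd u v = 1) (h2u : Int.gcd 2 u = 1) (h2v : Int.gcd 2 v = 1)
    (hexc : ¬((u = 1 ∧ m = 3) ∨ (u = 3 ∧ m = 2)))
    (γ : ℝ) (hγpos : 0 < γ) (hγirr : Irrational γ) (hγr : ∃ q : ℚ, γ ^ 2 = (q : ℝ))
    (η : ℂ)
    (hη : η = (γ : ℂ) *
      Complex.exp (2 * (Real.pi : ℂ) * Complex.I * (v : ℂ) / ((2 : ℂ) ^ m * (u : ℂ))))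
    (hdeg : (minpoly ℚ η).natDegree ≤ 2) :
    (minpoly ℚ η).map (algebraMap ℚ ℂ) = X ^ 2 - Polynomial.C ((γ : ℂ) ^ 2) ∨
    (minpoly ℚ η).map (algebraMap ℚ ℂ) = X ^ 2 + Polynomial.C ((γ : ℂ) ^ 2) :=
  stmt_3_general m u v hu huv h2u h2v hexc γ hγirr hγr η hη hdeg
end

section
/- Let r = 2. With γ, m, u, v, η as in the setup, assume the minimal polynomial P of η over ℚ has degree at most 2. If (u,m) = (1,3), then γ/√2 ∈ ℚ and there exists b ∈ ℚ with P = X² + 2bX + 2b². If (u,m) = (3,2), then γ/√3 ∈ ℚ and there exists b ∈ ℚ with P = X² + 3bX + 3b². -/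
/-!
Write `η = γ ζ` with `ζ` a primitive `8`th, resp. `12`th, root of unity. Since `|ζ| = 1`, the
complex conjugate of `η` is `γ ζ⁻¹`, so `η η̄ = γ²` and `(η + η̄)² = s γ²` with
`s = (ζ + ζ⁻¹)² = 4 cos² (2π v / n)`, which is `2`, resp. `3`. As `s ≠ 4`, `η` is not real,
so a minimal polynomial of degree at most `2` must be `(X - η)(X - η̄) = X² + c X + d` with
`c = -(η + η̄)` and `d = γ²` rational. Then `c² = s d`, which gives `γ / √s = |c| / s` and
`P = X² + s b X + s b²` with `b = c / s`.
-/

open Polynomial ComplexConjugate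

namespace IsPrimitiveRoot

variable {K : Type*} [Field K] {ζ : K}

theorem pow_eq_neg_one_of_two_mul {k : ℕ} (h : IsPrimitiveRoot ζ (2 * k)) (hk : k ≠ 0) :
    ζ ^ k = -1 := by
  have h2 := h.pow_of_dvd hk (dvd_mul_left k 2)
  rw [Nat.mul_div_cancel _ (Nat.pos_of_ne_zero hk)] at h2
  exact h2.eq_neg_one_of_two_right

theorem add_inv_sq_of_eight (h : IsPrimitiveRoot ζ 8) : (ζ + ζ⁻¹) ^ 2 = 2 := by
  have h4 : ζ ^ 4 = -1 := pow_eq_neg_one_of_two_mul (k := 4) h (by norm_num)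
  have h0 : ζ ≠ 0 := h.ne_zero (by norm_num)
  field_simp
  linear_combination h4

theorem add_inv_sq_of_twelve (h : IsPrimitiveRoot ζ 12) : (ζ + ζ⁻¹) ^ 2 = 3 := by
  have h6 : ζ ^ 6 = -1 := pow_eq_neg_one_of_two_mul (k := 6) h (by norm_num)
  have h0 : ζ ≠ 0 := h.ne_zero (by norm_num)
  have h2 : ζ ^ 2 + 1 ≠ 0 := by
    intro h2
    have : ζ ^ 4 = 1 := by linear_combination (ζ ^ 2 - 1) * h2
    exact absurd ((h.pow_eq_one_iff_dvd 4).mp this) (by norm_num)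
  have h4 : ζ ^ 4 - ζ ^ 2 + 1 = 0 := by
    refine (mul_eq_zero.mp ?_).resolve_left h2
    linear_combination h6
  field_simp
  linear_combination h4

end IsPrimitiveRoot

theorem Complex.isPrimitiveRoot_exp_int_div {n : ℕ} (hn : n ≠ 0) {v : ℤ} (hv : v.gcd n = 1) :
    IsPrimitiveRoot (Complex.exp (2 * Real.pi * Complex.I * v / n)) n := by
  have : 2 * Real.pi * Complex.I * v / n = v * (2 * Real.pi * Complex.I / n) := by ring
  rw [this, Complex.exp_int_mul]
  exact (Complex.isPrimitiveRoot_exp n hn).zpow_of_gcd_eq_one v hv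

theorem exists_rat_minpoly_eq_of_conj_ne {η : ℂ} (hint : IsIntegral ℚ η) (hne : conj η ≠ η)
    (hdeg : (minpoly ℚ η).natDegree ≤ 2) :
    ∃ c d : ℚ, minpoly ℚ η = X ^ 2 + C c * X + C d ∧
      (c : ℂ) = -(η + conj η) ∧ (d : ℂ) = η * conj η := by
  have hnotrat : η ∉ (algebraMap ℚ ℂ).range := by
    rintro ⟨q, rfl⟩
    exact hne (by simp)
  have hdeg2 : IsMonicOfDegree (minpoly ℚ η) 2 :=
    ⟨hdeg.antisymm ((minpoly.two_le_natDegree_iff hint).mpr hnotrat), minpoly.monic hint⟩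
  obtain ⟨c, d, hP⟩ := isMonicOfDegree_two_iff.mp hdeg2
  have hroot : η ^ 2 + c * η + d = 0 := by
    simpa [hP] using minpoly.aeval ℚ η
  have hroot' : conj η ^ 2 + c * conj η + d = 0 := by
    simpa using congrArg conj hroot
  have hc : (c : ℂ) = -(η + conj η) := by
    have : (η - conj η) * (η + conj η + c) = 0 := by linear_combination hroot - hroot'
    linear_combination (mul_eq_zero.mp this).resolve_left (sub_ne_zero.mpr hne.symm)
  exact ⟨c, d, hP, hc, by linear_combination hroot - η * hc⟩

theorem exists_rat_div_sqrt_eq {γ : ℝ} (hγ : 0 ≤ γ) {c s : ℚ} (hs : 0 < s)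
    (h : (c : ℝ) ^ 2 = s * γ ^ 2) : ∃ q : ℚ, γ / √(s : ℝ) = q := by
  have hsR : (0 : ℝ) < s := mod_cast hs
  have habs : |(c : ℝ)| = √(s : ℝ) * γ := by
    rw [← Real.sqrt_sq_eq_abs, h, Real.sqrt_mul hsR.le, Real.sqrt_sq hγ]
  refine ⟨|c| / s, ?_⟩
  rw [Rat.cast_div, Rat.cast_abs, habs, div_eq_div_iff (Real.sqrt_pos.mpr hsR).ne' hsR.ne']
  linear_combination -γ * Real.mul_self_sqrt hsR.le

theorem exists_rat_div_sqrt_and_minpoly_map_eq {γ : ℝ} (hγ : 0 < γ) (hγ2 : ∃ q : ℚ, γ ^ 2 = q)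
    {ζ : ℂ} {n : ℕ} (hn : n ≠ 0) (hζn : ζ ^ n = 1) {s : ℚ} (hs : 0 < s) (hs4 : s ≠ 4)
    (hζs : (ζ + ζ⁻¹) ^ 2 = s) (hdeg : (minpoly ℚ ((γ : ℂ) * ζ)).natDegree ≤ 2) :
    (∃ q : ℚ, γ / √(s : ℝ) = q) ∧ ∃ b : ℚ, (minpoly ℚ ((γ : ℂ) * ζ)).map (algebraMap ℚ ℂ) =
      X ^ 2 + C ((s : ℂ) * b) * X + C ((s : ℂ) * b ^ 2) := by
  obtain ⟨q, hq⟩ := hγ2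
  have hγ0 : (γ : ℂ) ≠ 0 := mod_cast hγ.ne'
  have hζ0 : ζ ≠ 0 := by rintro rfl; simp [hn] at hζn
  have hγq : (γ : ℂ) ^ 2 = q := by exact_mod_cast congrArg ((↑) : ℝ → ℂ) hq
  have hconj : conj ((γ : ℂ) * ζ) = γ * ζ⁻¹ := by
    rw [map_mul, Complex.conj_ofReal,
      Complex.inv_eq_conj (Complex.norm_eq_one_of_pow_eq_one hζn hn)]
  have hint : IsIntegral ℚ ((γ : ℂ) * ζ) := by
    refine IsIntegral.of_pow (n := 2 * n) (by positivity) ?_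
    have : ((γ : ℂ) * ζ) ^ (2 * n) = algebraMap ℚ ℂ (q ^ n) := by
      rw [mul_pow, pow_mul, pow_mul', hζn, hγq]; simp
    rw [this]
    exact isIntegral_algebraMap
  have hne : conj ((γ : ℂ) * ζ) ≠ γ * ζ := by
    rw [hconj]
    intro h
    have hζ2 : ζ⁻¹ = ζ := mul_left_cancel₀ hγ0 h
    have hζζ : ζ * ζ = 1 := by nth_rw 1 [← hζ2]; exact inv_mul_cancel₀ hζ0
    have : (s : ℂ) = 4 := by rw [← hζs, hζ2]; linear_combination 4 * hζζ
    exact hs4 (mod_cast this)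
  obtain ⟨c, d, hP, hc, hd⟩ := exists_rat_minpoly_eq_of_conj_ne hint hne hdeg
  rw [hconj] at hc hd
  have hdγ : (d : ℂ) = γ ^ 2 := by rw [hd]; field_simp
  have hcs : (c : ℂ) ^ 2 = s * γ ^ 2 := by rw [hc, ← hζs]; field_simp
  have hsC : (s : ℂ) ≠ 0 := mod_cast hs.ne'
  refine ⟨exists_rat_div_sqrt_eq hγ.le hs (mod_cast hcs), c / s, ?_⟩
  rw [hP]
  simp only [Polynomial.map_add, Polynomial.map_pow, Polynomial.map_mul, Polynomial.map_X,
    Polynomial.map_C, eq_ratCast, Rat.cast_div]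
  congr 3
  · field_simp
  · field_simp
    linear_combination s * hdγ - hcs

theorem stmt_4_general (m : ℕ) (u v : ℤ)
    (huv : Int.gcd u v = 1) (h2v : Int.gcd 2 v = 1)
    (γ : ℝ) (hγpos : 0 < γ) (hγr : ∃ q : ℚ, γ ^ 2 = (q : ℝ))
    (η : ℂ)
    (hη : η = (γ : ℂ) *
      Complex.exp (2 * (Real.pi : ℂ) * Complex.I * (v : ℂ) / ((2 : ℂ) ^ m * (u : ℂ))))
    (hdeg : (minpoly ℚ η).natDegree ≤ 2) :
    ((u = 1 ∧ m = 3) →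
      (∃ q : ℚ, γ / Real.sqrt 2 = (q : ℝ)) ∧
      ∃ b : ℚ, (minpoly ℚ η).map (algebraMap ℚ ℂ) =
        X ^ 2 + Polynomial.C (2 * (b : ℂ)) * X + Polynomial.C (2 * (b : ℂ) ^ 2)) ∧
    ((u = 3 ∧ m = 2) →
      (∃ q : ℚ, γ / Real.sqrt 3 = (q : ℝ)) ∧
      ∃ b : ℚ, (minpoly ℚ η).map (algebraMap ℚ ℂ) =
        X ^ 2 + Polynomial.C (3 * (b : ℂ)) * X + Polynomial.C (3 * (b : ℂ) ^ 2)) := by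
  have hv2 : IsCoprime v 2 := (Int.isCoprime_iff_gcd_eq_one.mpr h2v).symm
  refine ⟨?_, ?_⟩
  · rintro ⟨rfl, rfl⟩
    have hζ := Complex.isPrimitiveRoot_exp_int_div (n := 8) (by norm_num)
      (Int.isCoprime_iff_gcd_eq_one.mp (by simpa using hv2.pow_right (n := 3)))
    rw [show (2 : ℂ) ^ 3 * ((1 : ℤ) : ℂ) = (8 : ℕ) by norm_num] at hη
    subst hη
    simpa using exists_rat_div_sqrt_and_minpoly_map_eq hγpos hγr (by norm_num) hζ.pow_eq_one
      (s := 2) (by norm_num) (by norm_num) (mod_cast hζ.add_inv_sq_of_eight) hdeg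
  · rintro ⟨rfl, rfl⟩
    have hv3 : IsCoprime v 3 := (Int.isCoprime_iff_gcd_eq_one.mpr huv).symm
    have hζ := Complex.isPrimitiveRoot_exp_int_div (n := 12) (by norm_num)
      (Int.isCoprime_iff_gcd_eq_one.mp (by simpa using (hv2.pow_right (n := 2)).mul_right hv3))
    rw [show (2 : ℂ) ^ 2 * ((3 : ℤ) : ℂ) = (12 : ℕ) by norm_num] at hη
    subst hη
    simpa using exists_rat_div_sqrt_and_minpoly_map_eq hγpos hγr (by norm_num) hζ.pow_eq_one
      (s := 3) (by norm_num) (by norm_num) (mod_cast hζ.add_inv_sq_of_twelve) hdeg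

/-- Take `r = 2` in the setup: `m ≥ 0`, `u ≥ 1`, `v` integers with
`gcd(u,v) = gcd(2,u) = gcd(2,v) = 1`, `γ` a positive irrational real with `γ² ∈ ℚ`,
and `η := γ · exp(2π√−1·v/(2^m·u))`.  Assume the minimal polynomial `P` of `η` over
`ℚ` has degree at most `2`.  If `(u,m) = (1,3)`, then `γ/√2 ∈ ℚ` and
`P = X² + 2bX + 2b²` for some `b ∈ ℚ`; if `(u,m) = (3,2)`, then `γ/√3 ∈ ℚ` and
`P = X² + 3bX + 3b²` for some `b ∈ ℚ`. -/
theorem stmt_4 (m : ℕ) (u v : ℤ) (hu : 1 ≤ u)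
    (huv : Int.gcd u v = 1) (h2u : Int.gcd 2 u = 1) (h2v : Int.gcd 2 v = 1)
    (γ : ℝ) (hγpos : 0 < γ) (hγirr : Irrational γ) (hγr : ∃ q : ℚ, γ ^ 2 = (q : ℝ))
    (η : ℂ)
    (hη : η = (γ : ℂ) *
      Complex.exp (2 * (Real.pi : ℂ) * Complex.I * (v : ℂ) / ((2 : ℂ) ^ m * (u : ℂ))))
    (hdeg : (minpoly ℚ η).natDegree ≤ 2) :
    ((u = 1 ∧ m = 3) →
      (∃ q : ℚ, γ / Real.sqrt 2 = (q : ℝ)) ∧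
      ∃ b : ℚ, (minpoly ℚ η).map (algebraMap ℚ ℂ) =
        X ^ 2 + Polynomial.C (2 * (b : ℂ)) * X + Polynomial.C (2 * (b : ℂ) ^ 2)) ∧
    ((u = 3 ∧ m = 2) →
      (∃ q : ℚ, γ / Real.sqrt 3 = (q : ℝ)) ∧
      ∃ b : ℚ, (minpoly ℚ η).map (algebraMap ℚ ℂ) =
        X ^ 2 + Polynomial.C (3 * (b : ℂ)) * X + Polynomial.C (3 * (b : ℂ) ^ 2)) :=
  stmt_4_general m u v huv h2v γ hγpos hγr η hη hdeg
end

section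
/- Let r be an odd prime, let c_1,…,c_r be rational numbers, and let γ be a positive real number with γ^r ∈ ℚ. If all coefficients of the polynomial ∏_{i=1}^r (X − γ·exp(2π√−1·c_i)) are rational, then all coefficients of ∏_{i=1}^r (X − exp(2π√−1·c_i)) are rational. -/
/-!
The coefficient `aₙ` of `∏ (X - exp (2πi cⱼ))` lies in the cyclotomic field `K = ℚ(ζₘ)` with
`m = ∏ den cⱼ`, and the corresponding coefficient of the `γ`-scaled product is `γᵏ aₙ` with
`k = r - n`. If `γᵏ aₙ ∈ ℚ` and `aₙ ≠ 0`, then `t = γᵏ` is a real element of `K` with `tʳ ∈ ℚ`.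
Since `Gal(K/ℚ)` is abelian, every automorphism commutes with complex conjugation, so `σ t` is
again real; being a real `r`-th root of `tʳ` with `r` odd, `σ t = t`. Hence `t ∈ ℚ`, and
`aₙ = γᵏ aₙ / t ∈ ℚ`.
-/

open Polynomial IntermediateField ComplexConjugate

theorem Polynomial.scaleRoots_prod_X_sub_C {R ι : Type*} [CommRing R] (s : Finset ι)
    (z : ι → R) (a : R) :
    (∏ i ∈ s, (X - C (z i))).scaleRoots a = ∏ i ∈ s, (X - C (z i * a)) := by
  nontriviality R
  classical
  induction s using Finset.induction_on with
  | empty => simp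
  | insert j s hj ih =>
    rw [Finset.prod_insert hj, Finset.prod_insert hj, mul_scaleRoots', ih, X_sub_C_scaleRoots]
    rw [(monic_X_sub_C _).leadingCoeff,
      (monic_prod_of_monic _ _ fun i _ => monic_X_sub_C (z i)).leadingCoeff, mul_one]
    exact one_ne_zero

theorem Polynomial.coeff_prod_X_sub_C_mem {R S ι : Type*} [CommRing R] [SetLike S R]
    [SubringClass S R] (K : S) (s : Finset ι) {z : ι → R} (hz : ∀ i ∈ s, z i ∈ K) (n : ℕ) :
    (∏ i ∈ s, (X - C (z i))).coeff n ∈ K := by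
  have hlifts : ∏ i ∈ s, (X - C (z i)) ∈ liftsRing (SubringClass.subtype K) :=
    prod_mem fun i hi => sub_mem (X_mem_lifts _) (C'_mem_lifts ⟨⟨z i, hz i hi⟩, rfl⟩)
  obtain ⟨y, hy⟩ := (lifts_iff_coeff_lifts _).mp ((lifts_iff_liftsRing _ _).mpr hlifts) n
  exact hy ▸ y.2

theorem Complex.exp_two_pi_mul_I_mul_ratCast_pow_eq_one {c : ℚ} {m : ℕ} (h : c.den ∣ m) :
    exp (2 * Real.pi * I * c) ^ m = 1 := by
  obtain ⟨t, rfl⟩ := h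
  rw [← exp_nat_mul, ← exp_int_mul_two_pi_mul_I (c.num * t)]
  congr 1
  have : (c : ℂ) * c.den = c.num := by exact_mod_cast Rat.mul_den_eq_num c
  push_cast
  linear_combination (2 * Real.pi * I * t) * this

theorem IsPrimitiveRoot.exp_two_pi_mul_I_mul_ratCast_mem_adjoin {ζ : ℂ} {m : ℕ} [NeZero m]
    (hζ : IsPrimitiveRoot ζ m) {c : ℚ} (h : c.den ∣ m) :
    Complex.exp (2 * Real.pi * Complex.I * c) ∈ ℚ⟮ζ⟯ := by
  obtain ⟨i, -, hi⟩ := hζ.eq_pow_of_pow_eq_one (Complex.exp_two_pi_mul_I_mul_ratCast_pow_eq_one h)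
  exact hi ▸ pow_mem (mem_adjoin_simple_self ℚ ζ) i

theorem IsPrimitiveRoot.isCyclotomicExtension_adjoin_simple (K : Type*) {L : Type*} [Field K]
    [Field L] [Algebra K L] {n : ℕ} [NeZero n] {ζ : L} (hζ : IsPrimitiveRoot ζ n) :
    IsCyclotomicExtension {n} K K⟮ζ⟯ := by
  have hint : IsIntegral K ζ := (hζ.isIntegral (Nat.pos_of_neZero n)).tower_top
  change IsCyclotomicExtension {n} K K⟮ζ⟯.toSubalgebra
  rw [adjoin_simple_toSubalgebra_of_isAlgebraic hint.isAlgebraic]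
  exact hζ.adjoin_isCyclotomicExtension K

section AbelianSubfield

variable {K : IntermediateField ℚ ℂ}

theorem IntermediateField.conj_algEquiv_apply_of_conj_eq [Normal ℚ K]
    [IsMulCommutative Gal(K/ℚ)] (σ : Gal(K/ℚ)) {y : K} (hy : conj (y : ℂ) = y) :
    conj (σ y : ℂ) = σ y := by
  let τ : Gal(K/ℚ) := (Complex.conjAe.restrictScalars ℚ).restrictNormal K
  have hτ : ∀ z : K, (τ z : ℂ) = conj (z : ℂ) := AlgEquiv.restrictNormal_commutes _ K
  have hτy : τ y = y := Subtype.ext ((hτ y).trans hy)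
  rw [← hτ, ← AlgEquiv.mul_apply, isMulCommutative_iff.mp ‹_› τ σ, AlgEquiv.mul_apply, hτy]

variable [FiniteDimensional ℚ K] [IsGalois ℚ K] [IsMulCommutative Gal(K/ℚ)]

theorem IntermediateField.mem_range_ratCast_of_pow_eq_ratCast {r : ℕ} (hr : Odd r) {t : ℝ}
    (ht : (t : ℂ) ∈ K) {q : ℚ} (hq : t ^ r = q) : t ∈ Set.range ((↑) : ℚ → ℝ) := by
  set y : K := ⟨t, ht⟩
  have hyr : y ^ r = algebraMap ℚ K q := Subtype.ext <| by
    simp only [SubmonoidClass.mk_pow, eq_ratCast, SubfieldClass.coe_ratCast, y]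
    exact_mod_cast hq
  have hfix : ∀ σ : Gal(K/ℚ), σ y = y := by
    intro σ
    obtain ⟨u, hu⟩ : ∃ u : ℝ, (u : ℂ) = σ y :=
      ⟨_, Complex.conj_eq_iff_re.mp (conj_algEquiv_apply_of_conj_eq σ (Complex.conj_ofReal t))⟩
    have hur : u ^ r = t ^ r := by
      have := congrArg (fun z : K => (z : ℂ)) (congrArg σ hyr)
      simp only [map_pow, AlgEquiv.commutes, SubmonoidClass.coe_pow, ← hu] at this
      simp only [eq_ratCast, SubfieldClass.coe_ratCast] at this
      rw [hq]
      exact_mod_cast this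
    exact Subtype.ext (by rw [← hu, hr.pow_inj.mp hur])
  obtain ⟨s, hs⟩ := (IsGalois.mem_range_algebraMap_iff_fixed y).mpr hfix
  refine ⟨s, ?_⟩
  have := congrArg Subtype.val hs
  simp only [eq_ratCast, SubfieldClass.coe_ratCast, y] at this
  exact_mod_cast this

theorem IntermediateField.mem_range_ratCast_of_real_mul_mem {r : ℕ} (hr : Odd r) {t : ℝ}
    (ht0 : t ≠ 0) {q : ℚ} (hq : t ^ r = q) {a : ℂ} (ha : a ∈ K)
    (hta : (t : ℂ) * a ∈ Set.range ((↑) : ℚ → ℂ)) : a ∈ Set.range ((↑) : ℚ → ℂ) := by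
  obtain ⟨p, hp⟩ := hta
  rcases eq_or_ne a 0 with rfl | ha0
  · exact ⟨0, Rat.cast_zero⟩
  have htK : (t : ℂ) ∈ K := by
    rw [eq_div_of_mul_eq ha0 hp.symm]
    exact div_mem (SubfieldClass.ratCast_mem K p) ha
  obtain ⟨s, rfl⟩ := mem_range_ratCast_of_pow_eq_ratCast hr htK hq
  refine ⟨p / s, ?_⟩
  have hs0 : (s : ℂ) ≠ 0 := by exact_mod_cast ht0
  push_cast
  rw [hp, Complex.ofReal_ratCast, mul_div_cancel_left₀ a hs0]

end AbelianSubfield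

theorem stmt_5_general (r : ℕ) (hodd : Odd r)
    (c : Fin r → ℚ) (γ : ℝ) (hγpos : 0 < γ) (hγr : ∃ q : ℚ, γ ^ r = (q : ℝ))
    (hrat : ∀ n : ℕ,
      ((∏ i : Fin r, (X - Polynomial.C ((γ : ℂ) *
        Complex.exp (2 * (Real.pi : ℂ) * Complex.I * ((c i : ℚ) : ℂ))))).coeff n)
        ∈ Set.range ((↑) : ℚ → ℂ)) :
    ∀ n : ℕ,
      ((∏ i : Fin r, (X - Polynomial.C
        (Complex.exp (2 * (Real.pi : ℂ) * Complex.I * ((c i : ℚ) : ℂ))))).coeff n)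
        ∈ Set.range ((↑) : ℚ → ℂ) := by
  obtain ⟨q, hq⟩ := hγr
  set e : Fin r → ℂ := fun i => Complex.exp (2 * Real.pi * Complex.I * c i)
  set m := ∏ i, (c i).den
  have : NeZero m := ⟨Finset.prod_ne_zero_iff.mpr fun i _ => (c i).den_nz⟩
  set ζ := Complex.exp (2 * Real.pi * Complex.I / m)
  have hζ : IsPrimitiveRoot ζ m := Complex.isPrimitiveRoot_exp m (NeZero.ne m)
  have : IsCyclotomicExtension {m} ℚ ℚ⟮ζ⟯ := hζ.isCyclotomicExtension_adjoin_simple ℚ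
  have := IsCyclotomicExtension.finiteDimensional {m} ℚ ℚ⟮ζ⟯
  have := IsCyclotomicExtension.isGalois {m} ℚ ℚ⟮ζ⟯
  have := IsCyclotomicExtension.isMulCommutative {m} ℚ ℚ⟮ζ⟯
  have he : ∀ i ∈ Finset.univ, e i ∈ ℚ⟮ζ⟯ := fun i _ =>
    hζ.exp_two_pi_mul_I_mul_ratCast_mem_adjoin (Finset.dvd_prod_of_mem _ (Finset.mem_univ i))
  have hscale : ∏ i, (X - C ((γ : ℂ) * e i)) = (∏ i, (X - C (e i))).scaleRoots (γ : ℂ) := by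
    simp_rw [scaleRoots_prod_X_sub_C, mul_comm]
  intro n
  set k := (∏ i, (X - C (e i))).natDegree - n
  refine mem_range_ratCast_of_real_mul_mem hodd (pow_ne_zero k hγpos.ne') (q := q ^ k) ?_
    (coeff_prod_X_sub_C_mem _ _ he n) ?_
  · rw [← pow_mul, mul_comm, pow_mul, hq, Rat.cast_pow]
  · convert hrat n using 2
    rw [hscale, coeff_scaleRoots, Complex.ofReal_pow, mul_comm]

/-- Let `r` be an odd prime, `c₁,…,c_r ∈ ℚ`, and `γ > 0` a real with
`γ^r ∈ ℚ`.  If all coefficients of `∏ᵢ (X − γ·exp(2π√−1·cᵢ))` are rational, then all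
coefficients of `∏ᵢ (X − exp(2π√−1·cᵢ))` are rational. -/
theorem stmt_5 (r : ℕ) (hrp : r.Prime) (hodd : Odd r)
    (c : Fin r → ℚ) (γ : ℝ) (hγpos : 0 < γ) (hγr : ∃ q : ℚ, γ ^ r = (q : ℝ))
    (hrat : ∀ n : ℕ,
      ((∏ i : Fin r, (X - Polynomial.C ((γ : ℂ) *
        Complex.exp (2 * (Real.pi : ℂ) * Complex.I * ((c i : ℚ) : ℂ))))).coeff n)
        ∈ Set.range ((↑) : ℚ → ℂ)) :
    ∀ n : ℕ,
      ((∏ i : Fin r, (X - Polynomial.C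
        (Complex.exp (2 * (Real.pi : ℂ) * Complex.I * ((c i : ℚ) : ℂ))))).coeff n)
        ∈ Set.range ((↑) : ℚ → ℂ) :=
  stmt_5_general r hodd c γ hγpos hγr hrat
end

section
/- Let r_0 and j_0 be positive integers and r_1 := r_0·j_0. Let S_0 be a set of complex r_0-th roots of unity with a function f_0 : S_0 → ℤ_{>0}. Let S_1 := { z ∈ ℂ : z^{r_1} = 1 and z^{j_0} ∈ S_0 } and f_1(z) := f_0(z^{j_0}). Let γ_1 ∈ ℂ∖{0} and γ_0 := γ_1^{j_0}. Define P_i(X) := ∏_{b ∈ S_i} (X − γ_i·b)^{f_i(b)} for i = 0, 1. Then P_0 has all coefficients in ℚ if and only if P_1 has all coefficients in ℚ. -/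
/-!
Writing `P₀` and `P₁` for the two products, `P₁ = expand j₀ P₀`, i.e. `P₁(X) = P₀(X ^ j₀)`:
the factors of `P₁` lying over `a ∈ S₀` are indexed by the `j₀`-th roots of `a`, and
`∏_{b ^ j₀ = a} (X - γ₁ b) = X ^ j₀ - γ₁ ^ j₀ a`. The coefficients of `expand j₀ P₀` are
those of `P₀` interspersed with zeros, so one polynomial is rational iff the other is.
-/

open Polynomial

namespace Polynomial

theorem forall_coeff_expand_mem_iff {R : Type*} [CommSemiring R] {j : ℕ} (hj : 0 < j)
    (p : R[X]) {s : Set R} (hs : 0 ∈ s) :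
    (∀ n, (expand R j p).coeff n ∈ s) ↔ ∀ n, p.coeff n ∈ s := by
  refine ⟨fun h n => ?_, fun h n => ?_⟩
  · simpa only [coeff_expand_mul hj] using h (n * j)
  · rw [coeff_expand hj]
    split_ifs
    exacts [h _, hs]

variable {K : Type*} [Field K] [IsAlgClosed K]

theorem prod_nthRootsFinset_X_sub_C {n : ℕ} (hn : (n : K) ≠ 0) {c : K} (hc : c ≠ 0) :
    ∏ b ∈ nthRootsFinset n c, (X - C b) = X ^ n - C c := by
  classical
  have hn₀ : n ≠ 0 := by rintro rfl; exact hn Nat.cast_zero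
  have hnodup : (nthRoots n c).Nodup := nodup_roots (separable_X_pow_sub_C c hn hc)
  have hcard : Multiset.card (X ^ n - C c).roots = (X ^ n - C c).natDegree :=
    IsAlgClosed.card_roots_eq_natDegree
  rw [nthRootsFinset_def, Finset.prod_eq_multiset_prod, Multiset.toFinset_val,
    Multiset.dedup_eq_self.mpr hnodup]
  exact prod_multiset_X_sub_C_of_monic_of_roots_card_eq (monic_X_pow_sub_C c hn₀) hcard

theorem prod_nthRootsFinset_X_sub_C_mul {n : ℕ} (hn : (n : K) ≠ 0) {c γ : K} (hc : c ≠ 0)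
    (hγ : γ ≠ 0) :
    ∏ b ∈ nthRootsFinset n c, (X - C (γ * b)) = X ^ n - C (γ ^ n * c) := by
  have hn₀ : 0 < n := Nat.pos_of_ne_zero (by rintro rfl; exact hn Nat.cast_zero)
  rw [← prod_nthRootsFinset_X_sub_C hn (mul_ne_zero (pow_ne_zero n hγ) hc)]
  refine Finset.prod_nbij' (γ * ·) (γ⁻¹ * ·) ?_ ?_ ?_ ?_ fun _ _ => rfl
  · intro b hb
    simp_all [mul_pow]
  · intro z hz
    simp_all [mul_pow]
  · intro b _
    simp [hγ]
  · intro z _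
    simp [hγ]

theorem prod_preimage_pow_X_sub_C_eq_expand {j : ℕ} (hj : (j : K) ≠ 0) {S₀ S₁ : Finset K}
    (hS₀ : 0 ∉ S₀) (hS₁ : ∀ z, z ∈ S₁ ↔ z ^ j ∈ S₀) (f : K → ℕ) {γ : K} (hγ : γ ≠ 0) :
    ∏ b ∈ S₁, (X - C (γ * b)) ^ f (b ^ j) =
      expand K j (∏ a ∈ S₀, (X - C (γ ^ j * a)) ^ f a) := by
  classical
  have hj₀ : 0 < j := Nat.pos_of_ne_zero (by rintro rfl; exact hj Nat.cast_zero)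
  rw [← Finset.prod_fiberwise_of_maps_to fun b hb => (hS₁ b).1 hb, map_prod]
  refine Finset.prod_congr rfl fun a ha => ?_
  have hfiber : S₁.filter (· ^ j = a) = nthRootsFinset j a := by
    ext z
    rw [Finset.mem_filter, hS₁, mem_nthRootsFinset hj₀]
    exact ⟨And.right, fun hz => ⟨hz ▸ ha, hz⟩⟩
  have ha₀ : a ≠ 0 := by rintro rfl; exact hS₀ ha
  calc ∏ b ∈ S₁.filter (· ^ j = a), (X - C (γ * b)) ^ f (b ^ j)
      = (∏ b ∈ nthRootsFinset j a, (X - C (γ * b))) ^ f a := by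
        rw [← hfiber, ← Finset.prod_pow]
        exact Finset.prod_congr rfl fun b hb => by rw [(Finset.mem_filter.1 hb).2]
    _ = expand K j ((X - C (γ ^ j * a)) ^ f a) := by
        rw [prod_nthRootsFinset_X_sub_C_mul hj ha₀ hγ, map_pow, map_sub, expand_X, expand_C]

end Polynomial

theorem stmt_7_general (r₀ j₀ : ℕ) (hr₀ : 0 < r₀) (hj₀ : 0 < j₀)
    (S₀ : Finset ℂ) (hS₀ : ∀ z ∈ S₀, z ^ r₀ = 1)
    (f₀ : ℂ → ℕ)
    (S₁ : Finset ℂ) (hS₁ : ∀ z : ℂ, z ∈ S₁ ↔ z ^ (r₀ * j₀) = 1 ∧ z ^ j₀ ∈ S₀)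
    (γ₁ : ℂ) (hγ₁ : γ₁ ≠ 0) :
    (∀ n : ℕ, ((∏ b ∈ S₀, (X - Polynomial.C (γ₁ ^ j₀ * b)) ^ f₀ b).coeff n)
        ∈ Set.range ((↑) : ℚ → ℂ)) ↔
    (∀ n : ℕ, ((∏ b ∈ S₁, (X - Polynomial.C (γ₁ * b)) ^ f₀ (b ^ j₀)).coeff n)
        ∈ Set.range ((↑) : ℚ → ℂ)) := by
  have hzero : (0 : ℂ) ∉ S₀ := fun h => by simpa [zero_pow hr₀.ne'] using hS₀ 0 h
  have hpreimage : ∀ z, z ∈ S₁ ↔ z ^ j₀ ∈ S₀ := fun z => by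
    rw [hS₁, mul_comm, pow_mul]
    exact ⟨And.right, fun hz => ⟨hS₀ _ hz, hz⟩⟩
  rw [prod_preimage_pow_X_sub_C_eq_expand (Nat.cast_ne_zero.2 hj₀.ne') hzero hpreimage f₀ hγ₁]
  exact (forall_coeff_expand_mem_iff hj₀ _ (Set.mem_range.2 ⟨0, Rat.cast_zero⟩)).symm

/-- Let `r₀, j₀ ≥ 1`, `r₁ := r₀·j₀`.  Let `S₀` be a set of complex
`r₀`-th roots of unity with a positive-integer-valued function `f₀` on it, let
`S₁ := { z : z^{r₁} = 1 ∧ z^{j₀} ∈ S₀ }` with `f₁(z) := f₀(z^{j₀})`, let `γ₁ ≠ 0`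
and `γ₀ := γ₁^{j₀}`.  Put `Pᵢ(X) := ∏_{b ∈ Sᵢ} (X − γᵢ·b)^{fᵢ(b)}`.  Then `P₀` has
all coefficients in `ℚ` iff `P₁` does. -/
theorem stmt_7 (r₀ j₀ : ℕ) (hr₀ : 0 < r₀) (hj₀ : 0 < j₀)
    (S₀ : Finset ℂ) (hS₀ : ∀ z ∈ S₀, z ^ r₀ = 1)
    (f₀ : ℂ → ℕ) (hf₀ : ∀ z ∈ S₀, 0 < f₀ z)
    (S₁ : Finset ℂ) (hS₁ : ∀ z : ℂ, z ∈ S₁ ↔ z ^ (r₀ * j₀) = 1 ∧ z ^ j₀ ∈ S₀)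
    (γ₁ : ℂ) (hγ₁ : γ₁ ≠ 0) :
    (∀ n : ℕ, ((∏ b ∈ S₀, (X - Polynomial.C (γ₁ ^ j₀ * b)) ^ f₀ b).coeff n)
        ∈ Set.range ((↑) : ℚ → ℂ)) ↔
    (∀ n : ℕ, ((∏ b ∈ S₁, (X - Polynomial.C (γ₁ * b)) ^ f₀ (b ^ j₀)).coeff n)
        ∈ Set.range ((↑) : ℚ → ℂ)) :=
  stmt_7_general r₀ j₀ hr₀ hj₀ S₀ hS₀ f₀ S₁ hS₁ γ₁ hγ₁
end

section
/- Let r_0 and j_0 be positive integers and r := r_0·j_0. Let a = (a_1,…,a_r) ∈ ℝ^r satisfy a_{i+r_0} = a_i − r_0 for all 1 ≤ i ≤ r − r_0. Then the following are equivalent: (i) there exists γ ∈ ℂ∖{0} with γ^r ∈ ℚ such that ∏_{i=1}^r (X − γ·exp(2π√−1·a_i/r)) has all coefficients in ℚ; (ii) there exists γ_0 ∈ ℂ∖{0} with γ_0^{r_0} ∈ ℚ such that ∏_{i=1}^{r_0} (X − γ_0·exp(2π√−1·a_i/r_0)) has all coefficients in ℚ. -/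
open Polynomial Finset

/-!
Write `e(x) = exp(2π√−1 x)` and split the indices `1, …, r₀j₀` into the `r₀` classes `i + r₀k`
(`1 ≤ i ≤ r₀`, `k < j₀`). By the recurrence, the roots `γ e(a_{i+r₀k}/r₀j₀)` of a class are
`α_i ζ^k` for a primitive `j₀`-th root of unity `ζ` and `α_i = γ e(a_i/r₀j₀)`, so the class
contributes `X^{j₀} - γ^{j₀} e(a_i/r₀)`. Thus the degree-`r₀j₀` polynomial for `γ` is the
degree-`r₀` polynomial for `γ^{j₀}` evaluated at `X^{j₀}`, whose coefficients are those of the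
latter interlaced with zeros. Finally every `γ₀ ∈ ℂ` is a `j₀`-th power.
-/

noncomputable def rootPoly (γ : ℂ) (a : ℕ → ℝ) (m : ℕ) : ℂ[X] :=
  ∏ i ∈ Icc 1 m, (X - C (γ * Complex.exp (2 * (Real.pi : ℂ) * Complex.I * ((a i : ℂ) / (m : ℂ)))))

theorem Finset.prod_Icc_one_mul {M : Type*} [CommMonoid M] (f : ℕ → M) (r m : ℕ) :
    ∏ i ∈ Icc 1 (r * m), f i = ∏ k ∈ range m, ∏ i ∈ Icc 1 r, f (i + r * k) := by
  have hIoc (n : ℕ) : Icc 1 n = Ioc 0 n := Icc_add_one_left_eq_Ioc 0 n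
  have hshift (n : ℕ) : Ioc n (n + r) = (Ioc 0 r).map (addRightEmbedding n) := by
    rw [map_add_right_Ioc, zero_add, add_comm]
  simp only [hIoc]
  induction m with
  | zero => simp
  | succ m ih =>
    rw [prod_range_succ, ← ih, mul_add_one,
      ← prod_Ioc_consecutive f (Nat.zero_le (r * m)) (Nat.le_add_right _ r), hshift, prod_map]
    rfl

theorem apply_add_mul_eq_sub {a : ℕ → ℝ} {r m : ℕ}
    (ha : ∀ i : ℕ, 1 ≤ i → i ≤ r * m - r → a (i + r) = a i - r) {i k : ℕ}
    (hi₁ : 1 ≤ i) (hir : i ≤ r) (hk : k < m) : a (i + r * k) = a i - r * k := by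
  induction k with
  | zero => simp
  | succ k ih =>
    have hle : i + r * k ≤ r * m - r :=
      calc i + r * k ≤ r * (k + 1) := by rw [mul_add_one]; omega
        _ ≤ r * (m - 1) := Nat.mul_le_mul_left r (by omega)
        _ = r * m - r := Nat.mul_sub_one r m
    rw [mul_add_one, ← add_assoc, ha _ (by omega) hle, ih (by omega)]
    push_cast
    ring

theorem prod_X_sub_C_mul_exp_sub (γ : ℂ) (b : ℝ) {r j : ℕ} (hr : 0 < r) (hj : 0 < j) :
    ∏ k ∈ range j, (X - C (γ * Complex.exp (2 * (Real.pi : ℂ) * Complex.I *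
        (((b - r * k : ℝ) : ℂ) / ((r * j : ℕ) : ℂ)))))
      = X ^ j - C (γ ^ j * Complex.exp (2 * (Real.pi : ℂ) * Complex.I * ((b : ℂ) / (r : ℂ)))) := by
  have hr' : (r : ℂ) ≠ 0 := Nat.cast_ne_zero.mpr hr.ne'
  have hj' : (j : ℂ) ≠ 0 := Nat.cast_ne_zero.mpr hj.ne'
  set α := γ * Complex.exp (2 * (Real.pi : ℂ) * Complex.I * ((b : ℂ) / ((r * j : ℕ) : ℂ)))
  have hζ : IsPrimitiveRoot (Complex.exp (2 * Real.pi * Complex.I / j))⁻¹ j :=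
    (Complex.isPrimitiveRoot_exp j hj.ne').inv
  have hα : α ^ j = γ ^ j * Complex.exp (2 * (Real.pi : ℂ) * Complex.I * ((b : ℂ) / (r : ℂ))) := by
    rw [mul_pow, ← Complex.exp_nat_mul]
    congr 2
    push_cast
    field_simp
  rw [X_pow_sub_C_eq_prod hζ hj hα]
  refine prod_congr rfl fun k _ => ?_
  rw [← Complex.exp_neg, ← Complex.exp_nat_mul, mul_left_comm, ← Complex.exp_add]
  congr 4
  push_cast
  field_simp
  ring

theorem rootPoly_mul_eq_expand (γ : ℂ) {a : ℕ → ℝ} {r j : ℕ} (hj : 0 < j)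
    (ha : ∀ i : ℕ, 1 ≤ i → i ≤ r * j - r → a (i + r) = a i - r) :
    rootPoly γ a (r * j) = expand ℂ j (rootPoly (γ ^ j) a r) := by
  rw [rootPoly, rootPoly, prod_Icc_one_mul, prod_comm, map_prod]
  refine prod_congr rfl fun i hi => ?_
  obtain ⟨hi₁, hir⟩ := mem_Icc.mp hi
  rw [map_sub, expand_X, expand_C, ← prod_X_sub_C_mul_exp_sub γ (a i) (by omega) hj]
  refine prod_congr rfl fun k hk => ?_
  rw [apply_add_mul_eq_sub ha hi₁ hir (mem_range.mp hk)]

theorem coeff_expand_mem_iff {R : Type*} [CommSemiring R] {S : Set R} (hS : (0 : R) ∈ S)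
    {j : ℕ} (hj : 0 < j) (p : R[X]) :
    (∀ n, (expand R j p).coeff n ∈ S) ↔ ∀ n, p.coeff n ∈ S := by
  refine ⟨fun h n => coeff_expand_mul hj p n ▸ h (n * j), fun h n => ?_⟩
  rw [coeff_expand hj]
  split_ifs
  exacts [h _, hS]

theorem stmt_8_general (r₀ j₀ : ℕ) (hj₀ : 0 < j₀)
    (a : ℕ → ℝ)
    (ha : ∀ i : ℕ, 1 ≤ i → i ≤ r₀ * j₀ - r₀ → a (i + r₀) = a i - r₀) :
    (∃ γ : ℂ, γ ≠ 0 ∧ (∃ q : ℚ, γ ^ (r₀ * j₀) = (q : ℂ)) ∧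
      ∀ n : ℕ, ((∏ i ∈ Finset.Icc 1 (r₀ * j₀),
          (X - Polynomial.C (γ * Complex.exp
            (2 * (Real.pi : ℂ) * Complex.I * ((a i : ℂ) / ((r₀ * j₀ : ℕ) : ℂ)))))).coeff n)
          ∈ Set.range ((↑) : ℚ → ℂ)) ↔
    (∃ γ₀ : ℂ, γ₀ ≠ 0 ∧ (∃ q : ℚ, γ₀ ^ r₀ = (q : ℂ)) ∧
      ∀ n : ℕ, ((∏ i ∈ Finset.Icc 1 r₀,
          (X - Polynomial.C (γ₀ * Complex.exp
            (2 * (Real.pi : ℂ) * Complex.I * ((a i : ℂ) / ((r₀ : ℕ) : ℂ)))))).coeff n)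
          ∈ Set.range ((↑) : ℚ → ℂ)) := by
  have h0 : (0 : ℂ) ∈ Set.range ((↑) : ℚ → ℂ) := ⟨0, Rat.cast_zero⟩
  simp only [← rootPoly.eq_def]
  simp only [rootPoly_mul_eq_expand _ hj₀ ha, coeff_expand_mem_iff h0 hj₀, pow_mul']
  constructor
  · rintro ⟨γ, hγ, hq, hcoeff⟩
    exact ⟨γ ^ j₀, pow_ne_zero _ hγ, hq, hcoeff⟩
  · rintro ⟨γ₀, hγ₀, hq, hcoeff⟩
    obtain ⟨γ, rfl⟩ := IsAlgClosed.exists_pow_nat_eq γ₀ hj₀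
    exact ⟨γ, ne_zero_pow hj₀.ne' hγ₀, hq, hcoeff⟩

/-- Let `r₀, j₀ ≥ 1`, `r := r₀·j₀`, and `a ∈ ℝ^r` with
`a_{i+r₀} = a_i − r₀` for `1 ≤ i ≤ r − r₀`.  Then there exists `γ ≠ 0` with
`γ^r ∈ ℚ` such that `∏_{i=1}^r (X − γ·exp(2π√−1·a_i/r))` has all coefficients in
`ℚ`, iff there exists `γ₀ ≠ 0` with `γ₀^{r₀} ∈ ℚ` such that
`∏_{i=1}^{r₀} (X − γ₀·exp(2π√−1·a_i/r₀))` has all coefficients in `ℚ`. -/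
theorem stmt_8 (r₀ j₀ : ℕ) (hr₀ : 0 < r₀) (hj₀ : 0 < j₀)
    (a : ℕ → ℝ)
    (ha : ∀ i : ℕ, 1 ≤ i → i ≤ r₀ * j₀ - r₀ → a (i + r₀) = a i - r₀) :
    (∃ γ : ℂ, γ ≠ 0 ∧ (∃ q : ℚ, γ ^ (r₀ * j₀) = (q : ℂ)) ∧
      ∀ n : ℕ, ((∏ i ∈ Finset.Icc 1 (r₀ * j₀),
          (X - Polynomial.C (γ * Complex.exp
            (2 * (Real.pi : ℂ) * Complex.I * ((a i : ℂ) / ((r₀ * j₀ : ℕ) : ℂ)))))).coeff n)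
          ∈ Set.range ((↑) : ℚ → ℂ)) ↔
    (∃ γ₀ : ℂ, γ₀ ≠ 0 ∧ (∃ q : ℚ, γ₀ ^ r₀ = (q : ℂ)) ∧
      ∀ n : ℕ, ((∏ i ∈ Finset.Icc 1 r₀,
          (X - Polynomial.C (γ₀ * Complex.exp
            (2 * (Real.pi : ℂ) * Complex.I * ((a i : ℂ) / ((r₀ : ℕ) : ℂ)))))).coeff n)
          ∈ Set.range ((↑) : ℚ → ℂ)) :=
  stmt_8_general r₀ j₀ hj₀ a ha
end

section
/- Let r, m be positive integers and a = (a_1,…,a_r) ∈ ℝ^r with a_1 ≥ a_2 ≥ ⋯ ≥ a_r ≥ a_1 − m. Then there exist integers k_0, ℓ with 0 ≤ k_0 ≤ r−1 satisfying condition (★)(k_0,ℓ) if and only if there exists ν ∈ ℝ with 2ν ∈ ℤ such that the polynomial ∏_{i=1}^r (X − exp(2π√−1·(a_i+ν)/m)) has all coefficients real. -/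
/-!
Put `c i = a i + ν` and let `f : ℤ → ℝ` enumerate the multiset `{c i + k m}` decreasingly, so
`f i = c i` for `1 ≤ i ≤ r` and `f (j + r) = f j - m`. The polynomial has real coefficients iff its
roots `exp (2πi c i / m)` are stable under conjugation, i.e. iff the residues of the `c i` modulo
`m` are stable under negation. Then `j ↦ -f (-j)` enumerates the same multiset decreasingly, hence
is a shift of `f`, i.e. `f j + f (N - j) = 0` for some `N`. The rigidity of decreasing enumerations
comes from the counting function `t ↦ ∑ i, ⌈(c i - t) / m⌉`: it locates `t` among the values of `f`,
and its increments depend only on the residues. Writing `N = r + 1 - k₀ - s r` with `0 ≤ k₀ < r`,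
the identity `f j + f (N - j) = 0` for `1 ≤ j ≤ r` is exactly (★)(k₀, ℓ) with `ℓ = s m + 2ν`.
-/

open Polynomial

theorem Finset.val_map_eq_sum {ι α : Type*} (s : Finset ι) (h : ι → α) :
    s.val.map h = ∑ i ∈ s, {h i} := by
  rw [← Multiset.sum_map_singleton (s.val.map h), Multiset.map_map]
  rfl

theorem Finset.prod_Icc_one_eq_prod_range {M : Type*} [CommMonoid M] (F : ℕ → M) (n : ℕ) :
    ∏ i ∈ Finset.Icc 1 n, F i = ∏ i ∈ Finset.range n, F (i + 1) := by
  induction n with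
  | zero => simp
  | succ n ih => rw [Finset.prod_Icc_succ_top (by omega), Finset.prod_range_succ, ih]

theorem Multiset.forall_coeff_prod_X_sub_C_mem_range_ofReal_iff (s : Multiset ℂ) :
    (∀ n, (s.map fun z => X - C z).prod.coeff n ∈ Set.range ((↑) : ℝ → ℂ)) ↔
      s.map (starRingEnd ℂ) = s := by
  have hconj : (s.map fun z => X - C z).prod.map (starRingEnd ℂ) =
      ((s.map (starRingEnd ℂ)).map fun z => X - C z).prod := by
    simp [Polynomial.map_multiset_prod, Multiset.map_map]
  calc (∀ n, (s.map fun z => X - C z).prod.coeff n ∈ Set.range ((↑) : ℝ → ℂ))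
      ↔ (s.map fun z => X - C z).prod.map (starRingEnd ℂ) = (s.map fun z => X - C z).prod := by
        rw [Polynomial.ext_iff]
        refine forall_congr' fun n => ?_
        rw [coeff_map, Complex.conj_eq_iff_real]
        exact ⟨fun ⟨y, hy⟩ => ⟨y, hy.symm⟩, fun ⟨y, hy⟩ => ⟨y, hy.symm⟩⟩
    _ ↔ s.map (starRingEnd ℂ) = s := by
        rw [hconj]
        refine ⟨fun h => ?_, fun h => by rw [h]⟩
        simpa only [roots_multiset_prod_X_sub_C] using congrArg Polynomial.roots h

theorem AddCircle.forall_coeff_prod_X_sub_toCircle_mem_range_ofReal_iff {T : ℝ} (hT : T ≠ 0)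
    (R : Multiset (AddCircle T)) :
    (∀ n, ((R.map fun x => X - C ((toCircle x : Circle) : ℂ)).prod.coeff n ∈
      Set.range ((↑) : ℝ → ℂ))) ↔ R.map Neg.neg = R := by
  have hinj : Function.Injective fun x : AddCircle T => ((toCircle x : Circle) : ℂ) :=
    Circle.coe_injective.comp (injective_toCircle hT)
  have h := Multiset.forall_coeff_prod_X_sub_C_mem_range_ofReal_iff
    (R.map fun x => ((toCircle x : Circle) : ℂ))
  simp only [Multiset.map_map, Function.comp_def] at h
  rw [h, ← (Multiset.map_injective hinj).eq_iff, Multiset.map_map]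
  simp only [Function.comp_def, toCircle_neg, Circle.coe_inv_eq_conj]

namespace Staircase

variable {r m : ℕ} {f g : ℤ → ℝ}

theorem exists_eq_add_mul (hr : 0 < r) (u : ℤ) :
    ∃ i : ℕ, 1 ≤ i ∧ i ≤ r ∧ ∃ q : ℤ, u = i + q * r := by
  obtain ⟨n, hn⟩ := Int.eq_ofNat_of_zero_le (Int.emod_nonneg (u - 1) (by omega : (r : ℤ) ≠ 0))
  have hlt := Int.emod_lt_of_pos (u - 1) (by omega : (0 : ℤ) < r)
  refine ⟨n + 1, by omega, by omega, (u - 1) / r, ?_⟩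
  push_cast
  linear_combination (Int.mul_ediv_add_emod (u - 1) r).symm + hn

theorem apply_add_mul (hf : ∀ j, f (j + r) = f j - m) (j q : ℤ) :
    f (j + q * r) = f j - q * m := by
  induction q using Int.induction_on with
  | zero => simp
  | succ q ih =>
    rw [show j + (q + 1) * r = j + q * r + r by ring, hf, ih]
    push_cast
    ring
  | pred q ih =>
    have h := hf (j + (-q - 1) * r)
    rw [show j + (-q - 1) * r + r = j + -q * r by ring, ih] at h
    push_cast at h ⊢
    linarith

theorem antitone_of_window (hr : 0 < r) (hf : ∀ j, f (j + r) = f j - m)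
    (hstep : ∀ i : ℕ, 1 ≤ i → i ≤ r → f (i + 1) ≤ f i) : Antitone f := by
  refine antitone_int_of_succ_le fun j => ?_
  obtain ⟨i, hi1, hir, q, rfl⟩ := exists_eq_add_mul hr j
  rw [add_right_comm, apply_add_mul hf, apply_add_mul hf]
  linarith [hstep i hi1 hir]

theorem eq_zero_of_window {F : ℤ → ℝ} (hr : 0 < r) (hF : Function.Periodic F r)
    (h : ∀ i : ℕ, 1 ≤ i → i ≤ r → F i = 0) (u : ℤ) : F u = 0 := by
  obtain ⟨i, hi1, hir, q, rfl⟩ := exists_eq_add_mul hr u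
  simpa using (hF.int_mul q i).trans (h i hi1 hir)

/-- `stair r m a (i + q * r) = a i - q * m` for `1 ≤ i ≤ r`; when `a 1 ≥ ⋯ ≥ a r ≥ a 1 - m`
it enumerates the multiset `{a i + k * m}` decreasingly. -/
noncomputable def stair (r m : ℕ) (a : ℕ → ℝ) (j : ℤ) : ℝ :=
  a (((j - 1) % r).toNat + 1) - ((j - 1) / r : ℤ) * m

theorem stair_natCast {a : ℕ → ℝ} {i : ℕ} (h1 : 1 ≤ i) (h2 : i ≤ r) : stair r m a i = a i := by
  have e1 : ((i : ℤ) - 1) % r = i - 1 := Int.emod_eq_of_lt (by omega) (by omega)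
  have e2 : ((i : ℤ) - 1) / r = 0 := Int.ediv_eq_zero_of_lt (by omega) (by omega)
  rw [stair, e1, e2, show ((i : ℤ) - 1).toNat + 1 = i by omega]
  simp

theorem stair_add (hr : 0 < r) (a : ℕ → ℝ) (j : ℤ) : stair r m a (j + r) = stair r m a j - m := by
  have e1 : (j + r - 1) % r = (j - 1) % r := by
    rw [show j + r - 1 = j - 1 + r * 1 by ring, Int.add_mul_emod_self_left]
  have e2 : (j + r - 1) / r = (j - 1) / r + 1 := by
    rw [show j + r - 1 = j - 1 + 1 * r by ring, Int.add_mul_ediv_right _ _ (by omega)]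
  rw [stair, stair, e1, e2]
  push_cast
  ring

theorem antitone_stair {a : ℕ → ℝ} (hr : 0 < r) (hmono : ∀ i, 1 ≤ i → i < r → a (i + 1) ≤ a i)
    (hlast : a 1 - m ≤ a r) : Antitone (stair r m a) := by
  refine antitone_of_window hr (stair_add hr a) fun i hi1 hir => ?_
  rw [stair_natCast hi1 hir]
  rcases hir.lt_or_eq with hir | rfl
  · exact_mod_cast (stair_natCast (m := m) (a := a) (by omega : 1 ≤ i + 1) hir).trans_le
      (hmono i hi1 hir)
  · rw [add_comm, stair_add hr, ← Nat.cast_one, stair_natCast le_rfl hi1]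
    exact hlast

theorem comp_add (hf : ∀ j, f (j + r) = f j - m) (k : ℤ) :
    ∀ j, f (j + r + k) = f (j + k) - m := fun j => by rw [add_right_comm, hf]

/-- For antitone `f` with `f (j + r) = f j - m`, the largest `j` with `t < f j`. -/
noncomputable def ceilSum (r m : ℕ) (f : ℤ → ℝ) (t : ℝ) : ℤ :=
  ∑ i ∈ Finset.range r, ⌈(f (i + 1) - t) / m⌉

theorem ceilSum_comp_add_one (hm : 0 < m) (hf : ∀ j, f (j + r) = f j - m) (t : ℝ) :
    ceilSum r m (fun j => f (j + 1)) t = ceilSum r m f t - 1 := by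
  have hm' : (m : ℝ) ≠ 0 := by positivity
  have h := Finset.sum_range_succ' (fun i : ℕ => ⌈(f (i + 1) - t) / m⌉) r
  rw [Finset.sum_range_succ] at h
  have hlast : ⌈(f ((r : ℕ) + 1) - t) / m⌉ = ⌈(f 1 - t) / m⌉ - 1 := by
    rw [add_comm, hf, ← Int.ceil_sub_one]
    congr 1
    field_simp
    ring
  simp only [ceilSum]
  push_cast at h hlast ⊢
  linarith

theorem ceilSum_comp_add (hm : 0 < m) (hf : ∀ j, f (j + r) = f j - m) (t : ℝ) (k : ℤ) :
    ceilSum r m (fun j => f (j + k)) t = ceilSum r m f t - k := by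
  induction k using Int.induction_on with
  | zero => simp
  | succ k ih =>
    have h := ceilSum_comp_add_one hm (f := fun j => f (j + k)) (comp_add hf k) t
    simp only [add_assoc, add_comm (1 : ℤ) (k : ℤ)] at h
    rw [h, ih]
    ring
  | pred k ih =>
    have h := ceilSum_comp_add_one hm (f := fun j => f (j + (-k - 1))) (comp_add hf _) t
    simp only [add_assoc, show (1 : ℤ) + (-k - 1) = -k by ring] at h
    rw [ih] at h
    linarith

theorem zero_lt_ceilSum_iff (hr : 0 < r) (hm : 0 < m) (hf : ∀ j, f (j + r) = f j - m)
    (hanti : Antitone f) (t : ℝ) : 0 < ceilSum r m f t ↔ t < f 1 := by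
  have hm' : (0 : ℝ) < m := by exact_mod_cast hm
  have hupper (i : ℕ) : f (i + 1) ≤ f 1 := hanti (by omega)
  have hlower (i : ℕ) (hi : i < r) : f 1 - m ≤ f (i + 1) := by
    rw [← hf]
    exact hanti (by omega)
  constructor
  · intro hpos
    by_contra! ht
    refine hpos.not_ge (Finset.sum_nonpos fun i _ => Int.ceil_nonpos.mpr ?_)
    exact div_nonpos_of_nonpos_of_nonneg (by linarith [hupper i]) hm'.le
  · intro ht
    obtain ⟨n, rfl⟩ := Nat.exists_eq_add_one.mpr hr
    rw [ceilSum, Finset.sum_range_succ']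
    have hfirst : 0 < ⌈(f ((0 : ℕ) + 1) - t) / m⌉ :=
      Int.ceil_pos.mpr (div_pos (by simpa using ht) hm')
    have hrest : 0 ≤ ∑ i ∈ Finset.range n, ⌈(f ((i + 1 : ℕ) + 1) - t) / m⌉ := by
      refine Finset.sum_nonneg fun i hi => ?_
      have : (-1 : ℤ) < ⌈(f ((i + 1 : ℕ) + 1) - t) / m⌉ := by
        rw [Int.lt_ceil, lt_div_iff₀ hm']
        have := hlower (i + 1) (by simpa using hi)
        push_cast at this ⊢
        linarith
      omega
    omega

theorem lt_iff_le_ceilSum (hr : 0 < r) (hm : 0 < m) (hf : ∀ j, f (j + r) = f j - m)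
    (hanti : Antitone f) (t : ℝ) (j : ℤ) : t < f j ↔ j ≤ ceilSum r m f t := by
  have h := zero_lt_ceilSum_iff hr hm (f := fun u => f (u + (j - 1)))
    (comp_add hf _) (fun u v huv => hanti (by omega)) t
  rw [ceilSum_comp_add hm hf, add_sub_cancel] at h
  rw [← h]
  omega

noncomputable def residues (r m : ℕ) (f : ℤ → ℝ) : Multiset (AddCircle (m : ℝ)) :=
  (Finset.range r).val.map fun i : ℕ => ((f (i + 1) : ℝ) : AddCircle (m : ℝ))

theorem residues_comp_add_one (hf : ∀ j, f (j + r) = f j - m) :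
    residues r m (fun j => f (j + 1)) = residues r m f := by
  have h := Finset.sum_range_succ'
    (fun i : ℕ => ({((f (i + 1) : ℝ) : AddCircle (m : ℝ))} : Multiset (AddCircle (m : ℝ)))) r
  rw [Finset.sum_range_succ, add_comm ((r : ℕ) : ℤ), hf, ← AddCircle.coe_add_period, sub_add_cancel]
    at h
  simp only [residues, Finset.val_map_eq_sum]
  push_cast at h ⊢
  exact (add_right_cancel h).symm

theorem residues_comp_add (hf : ∀ j, f (j + r) = f j - m) (k : ℤ) :
    residues r m (fun j => f (j + k)) = residues r m f := by
  induction k using Int.induction_on with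
  | zero => simp
  | succ k ih =>
    rw [← ih, ← residues_comp_add_one (f := fun j => f (j + k)) (comp_add hf k)]
    simp only [add_assoc, add_comm (1 : ℤ) (k : ℤ)]
  | pred k ih =>
    rw [← ih, ← residues_comp_add_one (f := fun j => f (j + (-k - 1))) (comp_add hf _)]
    simp only [add_assoc, show (1 : ℤ) + (-k - 1) = -k by ring]

theorem residues_neg_comp_sub (hf : ∀ j, f (j + r) = f j - m) (N : ℤ) :
    residues r m (fun j => -f (N - j)) = (residues r m f).map Neg.neg := by
  rw [← residues_comp_add hf (N - r - 1), residues, residues, Multiset.map_map,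
    Finset.val_map_eq_sum, Finset.val_map_eq_sum, ← Finset.sum_range_reflect]
  refine Finset.sum_congr rfl fun i hi => ?_
  have hi := Finset.mem_range.mp hi
  simp only [Function.comp_apply, AddCircle.coe_neg]
  congr 4
  push_cast [Nat.cast_sub (by omega : 1 ≤ r), Nat.cast_sub (by omega : i ≤ r - 1)]
  ring

theorem periodic_ceil_sub_ceil (hm : 0 < m) (t t' : ℝ) :
    Function.Periodic (fun v : ℝ => ⌈(v - t) / m⌉ - ⌈(v - t') / m⌉) m := by
  have hm' : (m : ℝ) ≠ 0 := by positivity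
  intro v
  simp only [add_sub_right_comm v, add_div, div_self hm', Int.ceil_add_one]
  ring

theorem ceilSum_sub_ceilSum (hm : 0 < m) (t t' : ℝ) :
    ceilSum r m f t - ceilSum r m f t' =
      ((residues r m f).map (periodic_ceil_sub_ceil hm t t').lift).sum := by
  simp only [ceilSum, residues, Multiset.map_map, Function.comp_def,
    Function.Periodic.lift_coe, ← Finset.sum_sub_distrib]
  rfl

theorem exists_comp_add_eq_of_residues_eq (hr : 0 < r) (hm : 0 < m)
    (hf : ∀ j, f (j + r) = f j - m) (hg : ∀ j, g (j + r) = g j - m)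
    (hf_anti : Antitone f) (hg_anti : Antitone g) (h : residues r m f = residues r m g) :
    ∃ d : ℤ, ∀ j, g j = f (j + d) := by
  refine ⟨ceilSum r m f 0 - ceilSum r m g 0, fun j => eq_of_forall_lt_iff fun t => ?_⟩
  have hcount : ceilSum r m f t - ceilSum r m f 0 = ceilSum r m g t - ceilSum r m g 0 := by
    rw [ceilSum_sub_ceilSum hm, ceilSum_sub_ceilSum hm, h]
  rw [lt_iff_le_ceilSum hr hm hg hg_anti, lt_iff_le_ceilSum hr hm hf hf_anti]
  omega

theorem residues_neg_eq_iff (hr : 0 < r) (hm : 0 < m) (hf : ∀ j, f (j + r) = f j - m)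
    (hanti : Antitone f) :
    (residues r m f).map Neg.neg = residues r m f ↔ ∃ N : ℤ, ∀ j, f j + f (N - j) = 0 := by
  constructor
  · intro h
    have hg (j : ℤ) : -f (0 - (j + r)) = -f (0 - j) - m := by
      have := hf (0 - (j + r))
      rw [show 0 - (j + r) + r = 0 - j by ring] at this
      linarith
    obtain ⟨d, hd⟩ := exists_comp_add_eq_of_residues_eq hr hm hf hg hanti
      (fun u v huv => neg_le_neg (hanti (by omega))) (by rw [residues_neg_comp_sub hf, h])
    refine ⟨d, fun j => ?_⟩
    have := hd (j - d)
    simp only [zero_sub, neg_sub, sub_add_cancel] at this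
    linarith
  · rintro ⟨N, hN⟩
    have hrefl : (fun j => -f (N - j)) = f := funext fun j => by linarith [hN j]
    rw [← residues_neg_comp_sub hf N, hrefl]

/-- Condition (★)(k₀, ℓ) on `c 1, …, c r`. -/
def StarCondition (r m : ℕ) (c : ℕ → ℝ) (k₀ : ℤ) (ℓ : ℝ) : Prop :=
  ∀ i j : ℕ, 1 ≤ i → i ≤ r → 1 ≤ j → j ≤ r →
    ((i : ℤ) + j = r + 1 - k₀ → c i + c j = -ℓ) ∧
    ((i : ℤ) + j = 2 * r + 1 - k₀ → c i + c j = -ℓ - m)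

theorem starCondition_add_const {c : ℕ → ℝ} {k₀ : ℤ} {ℓ : ℝ} (ν : ℝ) :
    StarCondition r m (fun i => c i + ν) k₀ ℓ ↔ StarCondition r m c k₀ (ℓ + 2 * ν) := by
  refine forall₄_congr fun i j _ _ => forall₂_congr fun _ _ => and_congr ?_ ?_ <;>
    exact imp_congr_right fun _ => ⟨fun h => by linarith, fun h => by linarith⟩

theorem starCondition_of_reflection {c : ℕ → ℝ} (hr : 0 < r) (hf : ∀ j, f (j + r) = f j - m)
    (hfc : ∀ i : ℕ, 1 ≤ i → i ≤ r → f i = c i) {N : ℤ} (hN : ∀ j, f j + f (N - j) = 0) :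
    ∃ k₀ s : ℤ, 0 ≤ k₀ ∧ k₀ ≤ r - 1 ∧ StarCondition r m c k₀ (s * m) := by
  have hdiv := Int.mul_ediv_add_emod (r + 1 - N) r
  have hk₀ := Int.emod_nonneg (r + 1 - N) (by omega : (r : ℤ) ≠ 0)
  have hk₀r := Int.emod_lt_of_pos (r + 1 - N) (by omega : (0 : ℤ) < r)
  set k₀ := (r + 1 - N) % r
  set s := (r + 1 - N) / r
  refine ⟨k₀, s, hk₀, by omega, fun i j hi hir hj hjr => ⟨fun hij => ?_, fun hij => ?_⟩⟩
  · have h := hN i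
    rw [show N - i = j + (-s) * r by linear_combination hdiv - hij, apply_add_mul hf,
      hfc i hi hir, hfc j hj hjr] at h
    push_cast at h
    linarith
  · have h := hN i
    rw [show N - i = j + (-s - 1) * r by linear_combination hdiv - hij, apply_add_mul hf,
      hfc i hi hir, hfc j hj hjr] at h
    push_cast at h
    linarith

theorem reflection_of_starCondition {c : ℕ → ℝ} (hr : 0 < r) (hf : ∀ j, f (j + r) = f j - m)
    (hfc : ∀ i : ℕ, 1 ≤ i → i ≤ r → f i = c i) {k₀ s : ℤ} (hk₀ : 0 ≤ k₀) (hk₀r : k₀ ≤ r - 1)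
    (H : StarCondition r m c k₀ (s * m)) : ∃ N : ℤ, ∀ j, f j + f (N - j) = 0 := by
  refine ⟨r + 1 - k₀ - s * r, eq_zero_of_window hr (fun u => ?_) fun i hi hir => ?_⟩
  · have h := hf (r + 1 - k₀ - s * r - (u + r))
    rw [show r + 1 - k₀ - s * r - (u + r) + r = r + 1 - k₀ - s * r - u by ring] at h
    simp only [hf]
    linarith
  · by_cases hk : (i : ℤ) ≤ r - k₀
    · obtain ⟨j, hj⟩ := Int.eq_ofNat_of_zero_le (by omega : 0 ≤ (r : ℤ) + 1 - k₀ - i)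
      have hij := (H i j hi hir (by omega) (by omega)).1 (by omega)
      rw [show r + 1 - k₀ - s * r - i = j + (-s) * r by rw [← hj]; ring, apply_add_mul hf,
        hfc i hi hir, hfc j (by omega) (by omega)]
      push_cast
      linarith
    · obtain ⟨j, hj⟩ := Int.eq_ofNat_of_zero_le (by omega : 0 ≤ 2 * (r : ℤ) + 1 - k₀ - i)
      have hij := (H i j hi hir (by omega) (by omega)).2 (by omega)
      rw [show r + 1 - k₀ - s * r - i = j + (-s - 1) * r by rw [← hj]; ring, apply_add_mul hf,
        hfc i hi hir, hfc j (by omega) (by omega)]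
      push_cast
      linarith

theorem prod_X_sub_C_exp_eq {c : ℕ → ℝ} (hfc : ∀ i : ℕ, 1 ≤ i → i ≤ r → f i = c i) :
    ∏ i ∈ Finset.Icc 1 r,
        (X - C (Complex.exp (2 * (Real.pi : ℂ) * Complex.I * ((c i / m : ℝ) : ℂ)))) =
      ((residues r m f).map fun x => X - C ((AddCircle.toCircle x : Circle) : ℂ)).prod := by
  rw [Finset.prod_Icc_one_eq_prod_range, residues, Multiset.map_map]
  refine Finset.prod_congr rfl fun i hi => ?_
  have hi := Finset.mem_range.mp hi
  simp only [Function.comp_apply, AddCircle.toCircle_apply_mk, Circle.coe_exp]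
  rw [show ((i : ℤ) + 1) = ((i + 1 : ℕ) : ℤ) by push_cast; ring, hfc (i + 1) (by omega) (by omega)]
  push_cast
  ring_nf

end Staircase

open Staircase in
/-- Let `r, m ≥ 1` and `a ∈ ℝ^r` with
`a 1 ≥ a 2 ≥ ⋯ ≥ a r ≥ a 1 − m`.  Then there exist integers `k₀, ℓ` with
`0 ≤ k₀ ≤ r − 1` satisfying condition (★)(k₀,ℓ) — i.e. `a i + a j = −ℓ` whenever
`i + j = r + 1 − k₀` and `a i + a j = −ℓ − m` whenever `i + j = 2r + 1 − k₀`
(`1 ≤ i, j ≤ r`) — iff there exists a half-integer `ν` such that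
`∏_{i=1}^r (X − exp(2π√−1·(a i + ν)/m))` has all coefficients real. -/
theorem stmt_9 (r m : ℕ) (hr : 0 < r) (hm : 0 < m)
    (a : ℕ → ℝ)
    (hmono : ∀ i : ℕ, 1 ≤ i → i < r → a (i + 1) ≤ a i)
    (hlast : a 1 - m ≤ a r) :
    (∃ (k₀ ℓ : ℤ), 0 ≤ k₀ ∧ k₀ ≤ (r : ℤ) - 1 ∧
      ∀ i j : ℕ, 1 ≤ i → i ≤ r → 1 ≤ j → j ≤ r →
        ((i : ℤ) + j = r + 1 - k₀ → a i + a j = -(ℓ : ℝ)) ∧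
        ((i : ℤ) + j = 2 * r + 1 - k₀ → a i + a j = -(ℓ : ℝ) - m)) ↔
    (∃ ν : ℝ, (∃ z : ℤ, 2 * ν = (z : ℝ)) ∧
      ∀ n : ℕ, ((∏ i ∈ Finset.Icc 1 r,
        (X - Polynomial.C (Complex.exp
          (2 * (Real.pi : ℂ) * Complex.I * (((a i + ν) / m : ℝ) : ℂ))))).coeff n)
        ∈ Set.range ((↑) : ℝ → ℂ)) := by
  set f : ℝ → ℤ → ℝ := fun ν j => stair r m a j + ν with hfdef
  have hf (ν : ℝ) (j : ℤ) : f ν (j + r) = f ν j - m := by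
    simp only [hfdef, stair_add hr]
    ring
  have hanti (ν : ℝ) : Antitone (f ν) := (antitone_stair hr hmono hlast).add_const ν
  have hval (ν : ℝ) (i : ℕ) (h1 : 1 ≤ i) (h2 : i ≤ r) : f ν i = a i + ν := by
    simp only [hfdef, stair_natCast h1 h2]
  simp only [prod_X_sub_C_exp_eq (hval _),
    AddCircle.forall_coeff_prod_X_sub_toCircle_mem_range_ofReal_iff (by positivity : (m : ℝ) ≠ 0),
    residues_neg_eq_iff hr hm (hf _) (hanti _)]
  constructor
  · rintro ⟨k₀, ℓ, hk₀, hk₀r, H⟩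
    refine ⟨ℓ / 2, ⟨ℓ, by ring⟩, reflection_of_starCondition hr (hf _) (hval _) hk₀ hk₀r
      (s := 0) ((starCondition_add_const _).mpr ?_)⟩
    rwa [show ((0 : ℤ) : ℝ) * m + 2 * ((ℓ : ℝ) / 2) = ℓ by push_cast; ring]
  · rintro ⟨ν, ⟨z, hz⟩, N, hN⟩
    obtain ⟨k₀, s, hk₀, hk₀r, H⟩ := starCondition_of_reflection hr (hf ν) (hval ν) hN
    refine ⟨k₀, s * m + z, hk₀, hk₀r, ?_⟩
    have := (starCondition_add_const ν).mp H
    rw [hz] at this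
    show StarCondition r m a k₀ ((s * m + z : ℤ) : ℝ)
    exact_mod_cast this
end

section
/- Let m be a positive integer, let c_1 ≥ c_2 ≥ ⋯ ≥ c_r be real numbers with 0 ≥ c_1 and c_r > −m, and let s := #{ i : c_i = 0 }. If the polynomial ∏_{i=1}^r (X − exp(2π√−1·c_i/m)) has all coefficients real, then c_{s+j} + c_{r+1−j} = −m for every j = 1,…,r−s. -/
/-!
The roots of the polynomial are `exp(2πi c_i/m)`, and `x ↦ exp(2πi x/m)` is injective on
`(-m, 0]`. Real coefficients make the multiset of roots closed under complex conjugation, which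
sends `exp(2πi x/m)` to `exp(2πi (-m - x)/m)`. The `s` roots equal to `1` are fixed, so the
multiset of the nonzero `c_i` is invariant under the reflection `x ↦ -m - x`. This reflection
reverses order, so it carries the nonincreasing list `c_{s+1}, …, c_r` to the same list reversed,
which is the claimed pairing.
-/

open Polynomial ComplexConjugate

noncomputable def periodicExp (T x : ℝ) : ℂ :=
  Complex.exp (2 * Real.pi * Complex.I * ((x / T : ℝ) : ℂ))

theorem periodicExp_zero (T : ℝ) : periodicExp T 0 = 1 := by simp [periodicExp]

theorem conj_periodicExp (T x : ℝ) : conj (periodicExp T x) = periodicExp T (-x) := by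
  rw [periodicExp, periodicExp, ← Complex.exp_conj]
  simp [map_ofNat, neg_div]

theorem periodicExp_periodic {T : ℝ} (hT : T ≠ 0) : Function.Periodic (periodicExp T) T := by
  intro x
  rw [periodicExp, periodicExp, add_div, div_self hT, Complex.ofReal_add, Complex.ofReal_one,
    mul_add, mul_one, Complex.exp_add, Complex.exp_two_pi_mul_I, mul_one]

theorem periodicExp_eq_periodicExp_iff {T : ℝ} (hT : T ≠ 0) {x y : ℝ} :
    periodicExp T x = periodicExp T y ↔ ∃ n : ℤ, x = y + n * T := by
  rw [periodicExp, periodicExp, Complex.exp_eq_exp_iff_exists_int]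
  refine exists_congr fun n => ?_
  have h2πI : 2 * (Real.pi : ℂ) * Complex.I ≠ 0 := by simp [Real.pi_ne_zero]
  rw [show 2 * (Real.pi : ℂ) * Complex.I * ((y / T : ℝ) : ℂ) + n * (2 * Real.pi * Complex.I)
      = 2 * Real.pi * Complex.I * (((y / T + n : ℝ)) : ℂ) by push_cast; ring,
    mul_right_inj' h2πI, Complex.ofReal_inj, div_eq_iff hT, add_mul, div_mul_cancel₀ _ hT]

theorem injOn_periodicExp {T : ℝ} (hT : 0 < T) (a : ℝ) :
    Set.InjOn (periodicExp T) (Set.Ioc a (a + T)) := by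
  rintro x ⟨hax, hxa⟩ y ⟨hay, hya⟩ hxy
  obtain ⟨n, rfl⟩ := (periodicExp_eq_periodicExp_iff hT.ne').1 hxy
  have hn1 : (n : ℝ) < 1 := lt_of_mul_lt_mul_right (by linarith) hT.le
  have hn2 : (-1 : ℝ) < n := lt_of_mul_lt_mul_right (by linarith) hT.le
  obtain rfl : n = 0 := by
    have : n < 1 := by exact_mod_cast hn1
    have : -1 < n := by exact_mod_cast hn2
    omega
  simp

theorem Multiset.eq_of_map_eq_map_of_injOn {α β : Type*} {f : α → β} {A : Set α}
    (hf : Set.InjOn f A) {S S' : Multiset α} (hS : ∀ x ∈ S, x ∈ A)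
    (hS' : ∀ x ∈ S', x ∈ A) (h : S.map f = S'.map f) : S = S' := by
  obtain hα | hα := isEmpty_or_nonempty α
  · exact Subsingleton.elim S S'
  have key : ∀ U : Multiset α, (∀ x ∈ U, x ∈ A) →
      (U.map f).map (Function.invFunOn f A) = U := fun U hU => by
    rw [Multiset.map_map]
    exact (Multiset.map_congr rfl fun x hx => hf.leftInvOn_invFunOn (hU x hx)).trans
      (Multiset.map_id U)
  rw [← key S hS, h, key S' hS']

theorem Multiset.map_conj_eq_self_of_coeff_real (S : Multiset ℂ)
    (h : ∀ n, (S.map fun a => X - C a).prod.coeff n ∈ Set.range ((↑) : ℝ → ℂ)) :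
    S.map conj = S := by
  have hfix : (S.map fun a => X - C a).prod.map (starRingEnd ℂ) =
      (S.map fun a => X - C a).prod := by
    ext n
    obtain ⟨x, hx⟩ := h n
    rw [coeff_map, ← hx, Complex.conj_ofReal]
  have hprod :
      ((S.map conj).map fun a => X - C a).prod = (S.map fun a => X - C a).prod := by
    rw [← hfix, Polynomial.map_multiset_prod, Multiset.map_map, Multiset.map_map]
    simp
  simpa only [roots_multiset_prod_X_sub_C] using congrArg roots hprod

theorem Multiset.map_neg_sub_eq_self_of_map_conj_periodicExp {T : ℝ} (hT : 0 < T)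
    {N : Multiset ℝ} (hN : ∀ x ∈ N, x ∈ Set.Ioo (-T) 0)
    (h : (N.map (periodicExp T)).map conj = N.map (periodicExp T)) :
    N.map (fun x => -T - x) = N := by
  have hIoc : ∀ x ∈ N, x ∈ Set.Ioc (-T) (-T + T) := fun x hx =>
    ⟨(hN x hx).1, by linarith [(hN x hx).2]⟩
  refine Multiset.eq_of_map_eq_map_of_injOn (injOn_periodicExp hT (-T)) ?_ hIoc ?_
  · simp only [Multiset.mem_map]
    rintro _ ⟨x, hx, rfl⟩
    exact ⟨by linarith [(hN x hx).2], by linarith [(hN x hx).1]⟩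
  · rw [← h, Multiset.map_map, Multiset.map_map]
    refine Multiset.map_congr rfl fun x _ => ?_
    rw [Function.comp_apply, Function.comp_apply, conj_periodicExp,
      ← (periodicExp_periodic hT.ne').sub_eq (-x)]
    congr 1; ring

theorem List.SortedGE.getElem_add_getElem_eq_of_perm_map_sub {α : Type*} [AddCommGroup α]
    [LinearOrder α] [IsOrderedAddMonoid α] {l : List α} (hl : l.SortedGE) {t : α}
    (h : (l.map (t - ·)).Perm l) (i : ℕ) (hi : i < l.length) :
    l[i] + l[l.length - 1 - i] = t := by
  have hmap : (l.map (t - ·)).SortedLE :=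
    (List.pairwise_map.2 (hl.pairwise.imp fun hab => sub_le_sub_left hab t)).sortedLE
  have hrev := List.Perm.eq_reverse_of_sortedLE_of_sortedGE h hmap hl
  have hi' : t - l[i] = l[l.length - 1 - i] := by simpa [hi] using congrArg (·[i]?) hrev
  rw [← hi', add_sub_cancel]

theorem Nat.Icc_one_val_map_eq_replicate_add {α : Type*} {c : ℕ → α} {a : α} {s r : ℕ}
    (hsr : s ≤ r) (hzero : ∀ i, 1 ≤ i → i ≤ s → c i = a) :
    (Finset.Icc 1 r).val.map c =
      Multiset.replicate s a + ↑((List.range' (s + 1) (r - s)).map c) := by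
  have hrange : List.range' 1 r = List.range' 1 s ++ List.range' (1 + s) (r - s) := by
    rw [List.range'_append_1, Nat.add_sub_cancel' hsr]
  have hhead : (List.range' 1 s).map c = List.replicate s a := by
    refine List.eq_replicate_iff.2 ⟨by simp, ?_⟩
    simp only [List.mem_map, List.mem_range'_1]
    rintro _ ⟨i, hi, rfl⟩
    exact hzero i hi.1 (by omega)
  rw [Nat.Icc_eq_range', Nat.add_sub_cancel]
  change ((List.range' 1 r).map c : Multiset α) = _
  rw [hrange, List.map_append, hhead, ← Multiset.coe_add, Multiset.coe_replicate, add_comm 1 s]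

theorem AntitoneOn.sortedGE_map_range' {α : Type*} [Preorder α] {c : ℕ → α} {a n : ℕ}
    (hc : AntitoneOn c (Set.Ico a (a + n))) : ((List.range' a n).map c).SortedGE := by
  refine (List.pairwise_map.2 ((List.pairwise_lt_range' 1).imp_of_mem ?_)).sortedGE
  intro i j hi hj hij
  rw [List.mem_range'_1] at hi hj
  exact hc ⟨hi.1, hi.2⟩ ⟨hj.1, hj.2⟩ hij.le

theorem stmt_10_general (r m s : ℕ) (hm : 0 < m)
    (c : ℕ → ℝ)
    (hmono : ∀ i : ℕ, 1 ≤ i → i < r → c (i + 1) ≤ c i)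
    (hc1 : c 1 ≤ 0) (hcr : -(m : ℝ) < c r)
    (hsr : s ≤ r) (hs : ∀ i : ℕ, 1 ≤ i → i ≤ r → (c i = 0 ↔ i ≤ s))
    (hreal : ∀ n : ℕ, ((∏ i ∈ Finset.Icc 1 r,
        (X - Polynomial.C (Complex.exp
          (2 * (Real.pi : ℂ) * Complex.I * ((c i / m : ℝ) : ℂ))))).coeff n)
        ∈ Set.range ((↑) : ℝ → ℂ)) :
    ∀ j : ℕ, 1 ≤ j → j ≤ r - s → c (s + j) + c (r + 1 - j) = -(m : ℝ) := by
  have hanti : AntitoneOn c (Set.Icc 1 r) :=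
    antitoneOn_of_add_one_le Set.ordConnected_Icc fun i _ hi hi1 => hmono i hi.1 hi1.2
  set L := (List.range' (s + 1) (r - s)).map c with hL
  have hsplit : (Finset.Icc 1 r).val.map c = Multiset.replicate s (0 : ℝ) + (L : Multiset ℝ) :=
    Nat.Icc_one_val_map_eq_replicate_add hsr fun i hi his => (hs i hi (his.trans hsr)).2 his
  have hLmem : ∀ x ∈ L, x ∈ Set.Ioo (-(m : ℝ)) 0 := by
    simp only [hL, List.mem_map, List.mem_range'_1]
    rintro _ ⟨i, hi, rfl⟩
    have hir : i ∈ Set.Icc 1 r := ⟨by omega, by omega⟩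
    refine ⟨hcr.trans_le (hanti hir ⟨by omega, le_rfl⟩ hir.2), ?_⟩
    refine lt_of_le_of_ne ((hanti ⟨le_rfl, by omega⟩ hir hir.1).trans hc1) ?_
    exact fun h => absurd ((hs i hir.1 hir.2).1 h) (by omega)
  have hconj := Multiset.map_conj_eq_self_of_coeff_real
    (((Finset.Icc 1 r).val.map c).map (periodicExp m)) (by
      rw [Multiset.map_map, Multiset.map_map]; exact hreal)
  rw [hsplit, Multiset.map_add, Multiset.map_add, Multiset.map_replicate, Multiset.map_replicate,
    periodicExp_zero, map_one] at hconj
  have hsymm := Multiset.map_neg_sub_eq_self_of_map_conj_periodicExp (Nat.cast_pos.2 hm) hLmem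
    (add_left_cancel hconj)
  have hLsorted : L.SortedGE := (hanti.mono fun i hi => by
    simp only [Set.mem_Ico, Set.mem_Icc] at hi ⊢; omega).sortedGE_map_range'
  intro j hj hjs
  have hpair := hLsorted.getElem_add_getElem_eq_of_perm_map_sub
    (Multiset.coe_eq_coe.1 (by rwa [Multiset.map_coe] at hsymm)) (j - 1) (by simp [hL]; omega)
  simp only [hL, List.getElem_map, List.getElem_range'_1, List.length_map,
    List.length_range'] at hpair
  rwa [show s + 1 + (j - 1) = s + j by omega,
    show s + 1 + (r - s - 1 - (j - 1)) = r + 1 - j by omega] at hpair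

/-- Let `m ≥ 1`, and let `c 1 ≥ c 2 ≥ ⋯ ≥ c r` be reals with
`0 ≥ c 1` and `c r > −m`; let `s := #{i : c i = 0}` (since the `c i` are
nonincreasing, `c i = 0` exactly for `i ≤ s`).  If
`∏_{i=1}^r (X − exp(2π√−1·c i/m))` has all coefficients real, then
`c (s+j) + c (r+1−j) = −m` for every `j = 1,…,r−s`. -/
theorem stmt_10 (r m s : ℕ) (hr : 1 ≤ r) (hm : 0 < m)
    (c : ℕ → ℝ)
    (hmono : ∀ i : ℕ, 1 ≤ i → i < r → c (i + 1) ≤ c i)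
    (hc1 : c 1 ≤ 0) (hcr : -(m : ℝ) < c r)
    (hsr : s ≤ r) (hs : ∀ i : ℕ, 1 ≤ i → i ≤ r → (c i = 0 ↔ i ≤ s))
    (hreal : ∀ n : ℕ, ((∏ i ∈ Finset.Icc 1 r,
        (X - Polynomial.C (Complex.exp
          (2 * (Real.pi : ℂ) * Complex.I * ((c i / m : ℝ) : ℂ))))).coeff n)
        ∈ Set.range ((↑) : ℝ → ℂ)) :
    ∀ j : ℕ, 1 ≤ j → j ≤ r - s → c (s + j) + c (r + 1 - j) = -(m : ℝ) :=
  stmt_10_general r m s hm c hmono hc1 hcr hsr hs hreal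
end

section
/- In the setup below, let k_0, ℓ be integers with 0 ≤ k_0 ≤ r−1. Then condition (★)(k_0,ℓ) holds if and only if for every s ∈ ℤ with 0 ≤ k_0 + s·r_0 ≤ r−1 and all 1 ≤ i, j ≤ r: a_i + a_j = −ℓ + s·m_0 whenever i + j = r + 1 − (k_0 + s·r_0), and a_i + a_j = −ℓ − m + s·m_0 whenever i + j = 2r + 1 − (k_0 + s·r_0). -/
/-!
Since `b i = r a_i + m i` is `r`-periodic, `A i := (b i - m i) / r` extends `a` to all of `ℤ`,
and every period `p` of `b` satisfies `A (i + p) = A i - m p / r`. In terms of `A`, condition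
(★)(k, ℓ) says exactly that `A i + A j = -ℓ` on the whole antidiagonal `i + j = r + 1 - k` of
`ℤ × ℤ`: the second clause of (★) is the first one moved by the period `r`. Moving the
antidiagonal by the period `s r₀` of `b` turns (★)(k₀, ℓ) into (★)(k₀ + s r₀, ℓ - s m₀).
-/

/-- Membership in the set `𝒮(a,m)`: `j ∈ {1,…,r}`, `r₁ := r / gcd(m,r)` divides `j`,
and `b (i + j) = b i` for all `i ∈ ℤ`. -/
def SMem (r m : ℕ) (b : ℤ → ℝ) (j : ℕ) : Prop :=
  1 ≤ j ∧ j ≤ r ∧ (r / Nat.gcd m r) ∣ j ∧ ∀ i : ℤ, b (i + j) = b i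

open Function

/-- Condition (★)(k, ℓ), written with the level `c = -ℓ`. -/
def StarCondition (r m : ℕ) (a : ℕ → ℝ) (k : ℤ) (c : ℝ) : Prop :=
  ∀ i j : ℕ, 1 ≤ i → i ≤ r → 1 ≤ j → j ≤ r →
    ((i : ℤ) + j = r + 1 - k → a i + a j = c) ∧
    ((i : ℤ) + j = 2 * r + 1 - k → a i + a j = c - m)

noncomputable def aExt (r m : ℕ) (b : ℤ → ℝ) (i : ℤ) : ℝ := (b i - m * i) / r

lemma Int.exists_eq_add_mul_of_pos {r : ℕ} (hr : 0 < r) (i : ℤ) :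
    ∃ n : ℕ, 1 ≤ n ∧ n ≤ r ∧ ∃ q : ℤ, i = n + q * r := by
  have hdiv := Int.emod_add_mul_ediv (i - 1) r
  have h0 := Int.emod_nonneg (i - 1) (by omega : (r : ℤ) ≠ 0)
  have h1 := Int.emod_lt_of_pos (i - 1) (by omega : (0 : ℤ) < r)
  refine ⟨((i - 1) % r + 1).toNat, by omega, by omega, (i - 1) / r, ?_⟩
  rw [Int.toNat_of_nonneg (by omega)]
  linarith

section Extension

variable {r m : ℕ} {a : ℕ → ℝ} {b : ℤ → ℝ}

lemma aExt_natCast (hr : 0 < r) (hb : ∀ i : ℕ, 1 ≤ i → i ≤ r → b (i : ℤ) = r * a i + m * i)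
    {n : ℕ} (hn : 1 ≤ n) (hnr : n ≤ r) : aExt r m b n = a n := by
  have : (r : ℝ) ≠ 0 := by positivity
  rw [aExt, hb n hn hnr]
  push_cast
  field_simp
  ring

lemma aExt_add_of_periodic {p : ℤ} (hp : Periodic b p) (i : ℤ) :
    aExt r m b (i + p) = aExt r m b i - m * p / r := by
  simp only [aExt, hp i]
  push_cast
  ring

lemma aExt_add_mul_self (hr : 0 < r) (hbper : Periodic b r) (i q : ℤ) :
    aExt r m b (i + q * r) = aExt r m b i - q * m := by
  have : (r : ℝ) ≠ 0 := by positivity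
  have hq : Periodic b (q * r) := hbper.int_mul q
  rw [aExt_add_of_periodic hq]
  push_cast
  field_simp

variable (hr : 0 < r) (hb : ∀ i : ℕ, 1 ≤ i → i ≤ r → b (i : ℤ) = r * a i + m * i)
  (hbper : Periodic b r)
include hr hb hbper

lemma starCondition_of_aExt {k : ℤ} {c : ℝ}
    (h : ∀ i j : ℤ, i + j = r + 1 - k → aExt r m b i + aExt r m b j = c) :
    StarCondition r m a k c := by
  intro i j hi hir hj hjr
  rw [← aExt_natCast hr hb hi hir, ← aExt_natCast hr hb hj hjr]
  refine ⟨h i j, fun hij => ?_⟩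
  have hshift := h (i + (-1) * r) j (by omega)
  rw [aExt_add_mul_self hr hbper] at hshift
  push_cast at hshift
  linarith

lemma StarCondition.aExt_add_eq {k : ℤ} {c : ℝ} (hk : 0 ≤ k) (hk' : k ≤ r - 1)
    (h : StarCondition r m a k c) (i j : ℤ) (hij : i + j = r + 1 - k) :
    aExt r m b i + aExt r m b j = c := by
  obtain ⟨n, hn, hnr, q, rfl⟩ := Int.exists_eq_add_mul_of_pos hr i
  -- `j` is moved by the opposite multiple of `r`, landing in `[1, r]` or in `[1 - r, 0]`.
  obtain rfl : j = (r + 1 - k - n) + (-q) * r := by linarith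
  rw [aExt_add_mul_self hr hbper, aExt_add_mul_self hr hbper, aExt_natCast hr hb hn hnr]
  push_cast
  rcases le_or_gt 1 ((r : ℤ) + 1 - k - n) with hj | hj
  · obtain ⟨t, ht⟩ := Int.eq_ofNat_of_zero_le (by omega : 0 ≤ (r : ℤ) + 1 - k - n)
    rw [ht, aExt_natCast hr hb (by omega) (by omega)]
    have hsum := (h n t hn hnr (by omega) (by omega)).1 (by omega)
    linarith
  · obtain ⟨t, ht⟩ := Int.eq_ofNat_of_zero_le (by omega : 0 ≤ 2 * (r : ℤ) + 1 - k - n)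
    have hdown := aExt_add_mul_self (m := m) hr hbper t (-1)
    rw [show (t : ℤ) + (-1) * r = r + 1 - k - n by omega, aExt_natCast hr hb (by omega) (by omega)]
      at hdown
    have hsum := (h n t hn hnr (by omega) (by omega)).2 (by omega)
    push_cast at hdown
    linarith

lemma StarCondition.add_period {k : ℤ} {c : ℝ} (hk : 0 ≤ k) (hk' : k ≤ r - 1)
    (h : StarCondition r m a k c) {p : ℤ} (hp : Periodic b p) :
    StarCondition r m a (k + p) (c + m * p / r) :=
  starCondition_of_aExt hr hb hbper fun i j hij => by
    have := h.aExt_add_eq hr hb hbper hk hk' (i + p) j (by omega)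
    rw [aExt_add_of_periodic hp] at this
    linarith

end Extension

theorem stmt_11_general (r m : ℕ) (hr : 0 < r)
    (a : ℕ → ℝ)
    (b : ℤ → ℝ)
    (hb : ∀ i : ℕ, 1 ≤ i → i ≤ r → b (i : ℤ) = r * a i + m * i)
    (hbper : ∀ i : ℤ, b (i + r) = b i)
    (r₀ : ℕ) (hr₀mem : SMem r m b r₀)
    (m₀ : ℕ) (hm₀ : m₀ * r = m * r₀)
    (k₀ ℓ : ℤ) (hk₀ : 0 ≤ k₀) (hk₀' : k₀ ≤ (r : ℤ) - 1) :
    (∀ i j : ℕ, 1 ≤ i → i ≤ r → 1 ≤ j → j ≤ r →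
      ((i : ℤ) + j = r + 1 - k₀ → a i + a j = -(ℓ : ℝ)) ∧
      ((i : ℤ) + j = 2 * r + 1 - k₀ → a i + a j = -(ℓ : ℝ) - m)) ↔
    (∀ s : ℤ, 0 ≤ k₀ + s * r₀ → k₀ + s * r₀ ≤ (r : ℤ) - 1 →
      ∀ i j : ℕ, 1 ≤ i → i ≤ r → 1 ≤ j → j ≤ r →
        ((i : ℤ) + j = r + 1 - (k₀ + s * r₀) →
          a i + a j = -(ℓ : ℝ) + (s : ℝ) * m₀) ∧
        ((i : ℤ) + j = 2 * r + 1 - (k₀ + s * r₀) →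
          a i + a j = -(ℓ : ℝ) - m + (s : ℝ) * m₀)) := by
  constructor
  · intro hstar s _ _ i j hi hir hj hjr
    have hper : Periodic b (s * r₀ : ℤ) := Periodic.int_mul hr₀mem.2.2.2 s
    have hlevel : (m : ℝ) * ((s * r₀ : ℤ) : ℝ) / r = s * m₀ := by
      have : (r : ℝ) ≠ 0 := by positivity
      have hm₀' : (m₀ : ℝ) * r = m * r₀ := by exact_mod_cast hm₀
      rw [div_eq_iff this]
      push_cast
      linear_combination (s : ℝ) * hm₀'.symm
    have := (StarCondition.add_period hr hb hbper hk₀ hk₀' hstar hper) i j hi hir hj hjr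
    rw [hlevel] at this
    exact ⟨this.1, fun hij => (this.2 hij).trans (by ring)⟩
  · intro h i j hi hir hj hjr
    simpa using h 0 (by omega) (by omega) i j hi hir hj hjr

/-- In the setup (with `b i = r·a i + m·i` for `1 ≤ i ≤ r`, extended
`r`-periodically; `r₀ := min 𝒮(a,m)`; `m₀ := m·r₀/r` a positive integer), for integers
`k₀, ℓ` with `0 ≤ k₀ ≤ r − 1`, condition (★)(k₀,ℓ) holds iff for every `s ∈ ℤ` with
`0 ≤ k₀ + s·r₀ ≤ r − 1` and all `1 ≤ i, j ≤ r`: `a i + a j = −ℓ + s·m₀` whenever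
`i + j = r + 1 − (k₀ + s·r₀)`, and `a i + a j = −ℓ − m + s·m₀` whenever
`i + j = 2r + 1 − (k₀ + s·r₀)`. -/
theorem stmt_11 (r m : ℕ) (hr : 0 < r) (hm : 0 < m)
    (a : ℕ → ℝ)
    (hmono : ∀ i : ℕ, 1 ≤ i → i < r → a (i + 1) ≤ a i)
    (hlast : a 1 - m ≤ a r)
    (b : ℤ → ℝ)
    (hb : ∀ i : ℕ, 1 ≤ i → i ≤ r → b (i : ℤ) = r * a i + m * i)
    (hbper : ∀ i : ℤ, b (i + r) = b i)
    (r₀ : ℕ) (hr₀mem : SMem r m b r₀) (hr₀min : ∀ j : ℕ, SMem r m b j → r₀ ≤ j)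
    (m₀ : ℕ) (hm₀pos : 0 < m₀) (hm₀ : m₀ * r = m * r₀)
    (k₀ ℓ : ℤ) (hk₀ : 0 ≤ k₀) (hk₀' : k₀ ≤ (r : ℤ) - 1) :
    (∀ i j : ℕ, 1 ≤ i → i ≤ r → 1 ≤ j → j ≤ r →
      ((i : ℤ) + j = r + 1 - k₀ → a i + a j = -(ℓ : ℝ)) ∧
      ((i : ℤ) + j = 2 * r + 1 - k₀ → a i + a j = -(ℓ : ℝ) - m)) ↔
    (∀ s : ℤ, 0 ≤ k₀ + s * r₀ → k₀ + s * r₀ ≤ (r : ℤ) - 1 →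
      ∀ i j : ℕ, 1 ≤ i → i ≤ r → 1 ≤ j → j ≤ r →
        ((i : ℤ) + j = r + 1 - (k₀ + s * r₀) →
          a i + a j = -(ℓ : ℝ) + (s : ℝ) * m₀) ∧
        ((i : ℤ) + j = 2 * r + 1 - (k₀ + s * r₀) →
          a i + a j = -(ℓ : ℝ) - m + (s : ℝ) * m₀)) :=
  stmt_11_general r m hr a b hb hbper r₀ hr₀mem m₀ hm₀ k₀ ℓ hk₀ hk₀'
end

section
/- In the setup below, let k_0, ℓ be integers with 0 ≤ k_0 ≤ r−1. Then condition (★)(k_0,ℓ) holds if and only if for all 1 ≤ i, j ≤ r with i + j − 1 + k_0 ≡ 0 (mod r_0), one has a_i + a_j = −ℓ + m − (m_0/r_0)·(i + j − 1 + k_0). -/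
open Function

theorem Function.Periodic.eq_of_dvd_sub {α : Type*} {b : ℤ → α} {p : ℤ} (hb : Periodic b p)
    {x y : ℤ} (h : p ∣ x - y) : b x = b y := by
  obtain ⟨t, ht⟩ := h
  rw [show x = y + t * p by linarith]
  exact hb.int_mul t y

theorem exists_natCast_mem_Icc_dvd_sub {p : ℕ} (hp : 0 < p) (x : ℤ) :
    ∃ i : ℕ, 1 ≤ i ∧ i ≤ p ∧ (p : ℤ) ∣ x - i := by
  have h0 : 0 ≤ (x - 1) % p := Int.emod_nonneg _ (by omega)
  have hlt : (x - 1) % p < p := Int.emod_lt_of_pos _ (by omega)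
  refine ⟨((x - 1) % p).toNat + 1, by omega, by omega, ?_⟩
  push_cast [Int.toNat_of_nonneg h0]
  rw [sub_add_eq_sub_sub_swap]
  exact Int.dvd_self_sub_emod

theorem Function.Periodic.forall_add_eq_iff {α : Type*} [Add α] {b : ℤ → α} {p L : ℕ}
    (hb : Periodic b p) (hp : 0 < p) (hpL : p ≤ L) (k : ℤ) (C : α) :
    (∀ i j : ℕ, 1 ≤ i → i ≤ L → 1 ≤ j → j ≤ L → (p : ℤ) ∣ i + j - 1 + k → b i + b j = C) ↔
      ∀ x : ℤ, b x + b (1 - k - x) = C := by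
  constructor
  · intro h x
    obtain ⟨i, hi, hip, hxi⟩ := exists_natCast_mem_Icc_dvd_sub hp x
    obtain ⟨j, hj, hjp, hyj⟩ := exists_natCast_mem_Icc_dvd_sub hp (1 - k - x)
    have hij : (p : ℤ) ∣ i + j - 1 + k := by
      rw [show (i : ℤ) + j - 1 + k = -((x - i) + (1 - k - x - j)) by ring]
      exact (hxi.add hyj).neg_right
    rw [hb.eq_of_dvd_sub hxi, hb.eq_of_dvd_sub hyj]
    exact h i j hi (hip.trans hpL) hj (hjp.trans hpL) hij
  · intro h i j _ _ _ _ hij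
    rw [hb.eq_of_dvd_sub (show (p : ℤ) ∣ j - (1 - k - i) by convert hij using 1; ring)]
    exact h i

theorem natCast_dvd_add_sub_one_add_iff {r i j : ℕ} {k : ℤ} (hi : 1 ≤ i) (hir : i ≤ r)
    (hj : 1 ≤ j) (hjr : j ≤ r) (hk : 0 ≤ k) (hkr : k ≤ r - 1) :
    (r : ℤ) ∣ i + j - 1 + k ↔ (i : ℤ) + j = r + 1 - k ∨ (i : ℤ) + j = 2 * r + 1 - k := by
  constructor
  · rintro ⟨t, ht⟩
    have ht0 : 0 < t := by nlinarith
    have ht3 : t < 3 := by nlinarith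
    interval_cases t <;> omega
  · rintro (h | h)
    · exact ⟨1, by linarith⟩
    · exact ⟨2, by linarith⟩

theorem add_eq_iff_of_forall_eq_mul_add {r m : ℕ} {a : ℕ → ℝ} {b : ℤ → ℝ} (hr : 0 < r)
    (hb : ∀ i : ℕ, 1 ≤ i → i ≤ r → b (i : ℤ) = r * a i + m * i) {i j : ℕ}
    (hi : 1 ≤ i) (hir : i ≤ r) (hj : 1 ≤ j) (hjr : j ≤ r) (K : ℝ) :
    a i + a j = K ↔ b i + b j = r * K + m * (i + j) := by
  rw [hb i hi hir, hb j hj hjr,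
    show r * a i + m * i + (r * a j + m * j) = r * (a i + a j) + m * (i + j) by ring,
    add_left_inj, mul_right_inj' (by positivity)]

theorem stmt_12_general (r m : ℕ) (hr : 0 < r)
    (a : ℕ → ℝ)
    (b : ℤ → ℝ)
    (hb : ∀ i : ℕ, 1 ≤ i → i ≤ r → b (i : ℤ) = r * a i + m * i)
    (hbper : ∀ i : ℤ, b (i + r) = b i)
    (r₀ : ℕ) (hr₀mem : SMem r m b r₀)
    (m₀ : ℕ) (hm₀ : m₀ * r = m * r₀)
    (k₀ ℓ : ℤ) (hk₀ : 0 ≤ k₀) (hk₀' : k₀ ≤ (r : ℤ) - 1) :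
    (∀ i j : ℕ, 1 ≤ i → i ≤ r → 1 ≤ j → j ≤ r →
      ((i : ℤ) + j = r + 1 - k₀ → a i + a j = -(ℓ : ℝ)) ∧
      ((i : ℤ) + j = 2 * r + 1 - k₀ → a i + a j = -(ℓ : ℝ) - m)) ↔
    (∀ i j : ℕ, 1 ≤ i → i ≤ r → 1 ≤ j → j ≤ r →
      (r₀ : ℤ) ∣ ((i : ℤ) + j - 1 + k₀) →
      a i + a j = -(ℓ : ℝ) + m - ((m₀ : ℝ) / r₀) * (((i : ℤ) + j - 1 + k₀ : ℤ) : ℝ)) := by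
  obtain ⟨hr₀, hr₀r, -, hbr₀⟩ := hr₀mem
  set C : ℝ := m * (r + 1 - k₀) - ℓ * r with hC
  have hslope : (m₀ : ℝ) / r₀ = m / r := by
    rw [div_eq_div_iff (by positivity) (by positivity)]
    exact_mod_cast hm₀
  have hsym := (Periodic.forall_add_eq_iff (p := r) hbper hr le_rfl k₀ C).trans
    (Periodic.forall_add_eq_iff hbr₀ hr₀ hr₀r k₀ C).symm
  refine Iff.trans (forall₂_congr fun i j => forall₄_congr fun hi hir hj hjr => ?_)
    (hsym.trans (forall₂_congr fun i j => forall₄_congr fun hi hir hj hjr => ?_))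
  · rw [natCast_dvd_add_sub_one_add_iff hi hir hj hjr hk₀ hk₀', or_imp,
      add_eq_iff_of_forall_eq_mul_add hr hb hi hir hj hjr,
      add_eq_iff_of_forall_eq_mul_add hr hb hi hir hj hjr]
    refine and_congr (imp_congr_right fun h => ?_) (imp_congr_right fun h => ?_) <;>
    · rw [show (i : ℝ) + j = ((i + j : ℤ) : ℝ) by push_cast; ring, h]
      push_cast [hC]
      ring_nf
  · rw [add_eq_iff_of_forall_eq_mul_add hr hb hi hir hj hjr, hslope]
    refine imp_congr_right fun _ => ?_
    rw [show (r : ℝ) * (-ℓ + m - m / r * ((i + j - 1 + k₀ : ℤ) : ℝ)) + m * (i + j) = C by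
      push_cast; field_simp; ring]

/-- In the setup (with `b i = r·a i + m·i` for `1 ≤ i ≤ r`, extended
`r`-periodically; `r₀ := min 𝒮(a,m)`; `m₀ := m·r₀/r` a positive integer), for integers
`k₀, ℓ` with `0 ≤ k₀ ≤ r − 1`, condition (★)(k₀,ℓ) holds iff for all `1 ≤ i, j ≤ r`
with `i + j − 1 + k₀ ≡ 0 (mod r₀)` one has
`a i + a j = −ℓ + m − (m₀/r₀)·(i + j − 1 + k₀)`. -/
theorem stmt_12 (r m : ℕ) (hr : 0 < r) (hm : 0 < m)
    (a : ℕ → ℝ)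
    (hmono : ∀ i : ℕ, 1 ≤ i → i < r → a (i + 1) ≤ a i)
    (hlast : a 1 - m ≤ a r)
    (b : ℤ → ℝ)
    (hb : ∀ i : ℕ, 1 ≤ i → i ≤ r → b (i : ℤ) = r * a i + m * i)
    (hbper : ∀ i : ℤ, b (i + r) = b i)
    (r₀ : ℕ) (hr₀mem : SMem r m b r₀) (hr₀min : ∀ j : ℕ, SMem r m b j → r₀ ≤ j)
    (m₀ : ℕ) (hm₀pos : 0 < m₀) (hm₀ : m₀ * r = m * r₀)
    (k₀ ℓ : ℤ) (hk₀ : 0 ≤ k₀) (hk₀' : k₀ ≤ (r : ℤ) - 1) :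
    (∀ i j : ℕ, 1 ≤ i → i ≤ r → 1 ≤ j → j ≤ r →
      ((i : ℤ) + j = r + 1 - k₀ → a i + a j = -(ℓ : ℝ)) ∧
      ((i : ℤ) + j = 2 * r + 1 - k₀ → a i + a j = -(ℓ : ℝ) - m)) ↔
    (∀ i j : ℕ, 1 ≤ i → i ≤ r → 1 ≤ j → j ≤ r →
      (r₀ : ℤ) ∣ ((i : ℤ) + j - 1 + k₀) →
      a i + a j = -(ℓ : ℝ) + m - ((m₀ : ℝ) / r₀) * (((i : ℤ) + j - 1 + k₀ : ℤ) : ℝ)) :=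
  stmt_12_general r m hr a b hb hbper r₀ hr₀mem m₀ hm₀ k₀ ℓ hk₀ hk₀'
end

section
/- In the setup below: (1) r ∈ 𝒮(a,m); (2) if j, j' ∈ 𝒮(a,m) and j'' ∈ {1,…,r} satisfies j'' ≡ j + j' (mod r), then j'' ∈ 𝒮(a,m); (3) consequently r_0 := min 𝒮(a,m) divides every element of 𝒮(a,m), r_0 divides r, and r divides m·r_0. -/
/-!
If `p` is a period of `b`, then so is everything congruent to a period modulo `p`. Since the
periods of `b` are also closed under addition, `𝒮(a,m)` is closed under addition modulo `r` and
under reduction modulo any of its elements; so, as for the generator of a subgroup of `ℤ`, its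
least element `r₀` divides all the others. Finally `r₁ ∣ r₀` and `r ∣ lcm(m, r) = m · r₁`.
-/

open Function

theorem Function.Periodic.of_modEq {M α : Type*} [AddCommMonoid M] {f : M → α} {c c' p : M}
    (hc : Periodic f c) (hp : Periodic f p) (h : c ≡ c' [PMOD p]) : Periodic f c' := by
  obtain ⟨k, l, hkl⟩ := h
  intro x
  calc f (x + c') = f (x + c' + l • p) := ((hp.nsmul l) _).symm
    _ = f (x + c + k • p) := by rw [add_assoc, add_comm c', ← hkl, add_comm (k • p), add_assoc]
    _ = f x := by rw [hp.nsmul k, hc]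

theorem Nat.dvd_mul_of_div_gcd_dvd {m r k : ℕ} (h : r / Nat.gcd m r ∣ k) : r ∣ m * k :=
  calc r ∣ Nat.lcm m r := Nat.dvd_lcm_right m r
    _ = m * (r / Nat.gcd m r) := Nat.mul_div_assoc m (Nat.gcd_dvd_right m r)
    _ ∣ m * k := Nat.mul_dvd_mul_left m h

namespace SMem

variable {r m : ℕ} {b : ℤ → ℝ} {j j' j'' r₀ : ℕ}

theorem periodic (h : SMem r m b j) : Periodic b j := h.2.2.2

theorem self (hr : 0 < r) (hper : Periodic b r) : SMem r m b r :=
  ⟨hr, le_rfl, Nat.div_dvd_of_dvd (Nat.gcd_dvd_right m r), hper⟩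

theorem of_add_modEq (hper : Periodic b r) (hj : SMem r m b j) (hj' : SMem r m b j')
    (h1 : 1 ≤ j'') (h2 : j'' ≤ r) (hmod : j'' ≡ j + j' [MOD r]) : SMem r m b j'' := by
  have hdvd : r / Nat.gcd m r ∣ j + j' := dvd_add hj.2.2.1 hj'.2.2.1
  have hmod' : ((j + j' : ℕ) : ℤ) ≡ j'' [PMOD (r : ℤ)] :=
    AddCommGroup.natCast_modEq_natCast.mpr hmod.symm
  push_cast at hmod'
  refine ⟨h1, h2, ?_, (hj.periodic.add_period hj'.periodic).of_modEq hper hmod'⟩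
  exact Nat.modEq_zero_iff_dvd.mp
    ((hmod.of_dvd (Nat.div_dvd_of_dvd (Nat.gcd_dvd_right m r))).trans
      (Nat.modEq_zero_iff_dvd.mpr hdvd))

theorem mod (h₀ : SMem r m b r₀) (hj : SMem r m b j) (hne : j % r₀ ≠ 0) :
    SMem r m b (j % r₀) :=
  ⟨Nat.one_le_iff_ne_zero.mpr hne, (Nat.mod_le j r₀).trans hj.2.1,
    (Nat.dvd_mod_iff h₀.2.2.1).mpr hj.2.2.1,
    hj.periodic.of_modEq h₀.periodic
      (AddCommGroup.natCast_modEq_natCast.mpr (Nat.mod_modEq j r₀).symm)⟩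

theorem dvd_of_forall_le (h₀ : SMem r m b r₀) (hmin : ∀ j, SMem r m b j → r₀ ≤ j)
    (hj : SMem r m b j) : r₀ ∣ j := by
  by_contra hndvd
  have hne : j % r₀ ≠ 0 := fun h ↦ hndvd (Nat.dvd_of_mod_eq_zero h)
  exact (Nat.mod_lt j h₀.1).not_ge (hmin _ (h₀.mod hj hne))

end SMem

theorem stmt_13_general (r m : ℕ) (hr : 0 < r)
    (b : ℤ → ℝ)
    (hbper : ∀ i : ℤ, b (i + r) = b i) :
    SMem r m b r ∧
    (∀ j j' j'' : ℕ, SMem r m b j → SMem r m b j' →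
      1 ≤ j'' → j'' ≤ r → j'' % r = (j + j') % r → SMem r m b j'') ∧
    (∀ r₀ : ℕ, SMem r m b r₀ → (∀ j : ℕ, SMem r m b j → r₀ ≤ j) →
      ((∀ j : ℕ, SMem r m b j → r₀ ∣ j) ∧ r₀ ∣ r ∧ r ∣ m * r₀)) := by
  have hr_mem : SMem r m b r := .self hr hbper
  refine ⟨hr_mem, fun j j' j'' hj hj' h1 h2 hmod ↦ .of_add_modEq hbper hj hj' h1 h2 hmod, ?_⟩
  intro r₀ h₀ hmin
  exact ⟨fun j hj ↦ h₀.dvd_of_forall_le hmin hj, h₀.dvd_of_forall_le hmin hr_mem,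
    Nat.dvd_mul_of_div_gcd_dvd h₀.2.2.1⟩

/-- In the setup (with `b i = r·a i + m·i` for `1 ≤ i ≤ r`, extended
`r`-periodically):
(1) `r ∈ 𝒮(a,m)`;
(2) if `j, j' ∈ 𝒮(a,m)` and `j'' ∈ {1,…,r}` satisfies `j'' ≡ j + j' (mod r)`, then
`j'' ∈ 𝒮(a,m)`;
(3) consequently `r₀ := min 𝒮(a,m)` divides every element of `𝒮(a,m)`, `r₀` divides
`r`, and `r` divides `m·r₀`. -/
theorem stmt_13 (r m : ℕ) (hr : 0 < r) (hm : 0 < m)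
    (a : ℕ → ℝ)
    (hmono : ∀ i : ℕ, 1 ≤ i → i < r → a (i + 1) ≤ a i)
    (hlast : a 1 - m ≤ a r)
    (b : ℤ → ℝ)
    (hb : ∀ i : ℕ, 1 ≤ i → i ≤ r → b (i : ℤ) = r * a i + m * i)
    (hbper : ∀ i : ℤ, b (i + r) = b i) :
    SMem r m b r ∧
    (∀ j j' j'' : ℕ, SMem r m b j → SMem r m b j' →
      1 ≤ j'' → j'' ≤ r → j'' % r = (j + j') % r → SMem r m b j'') ∧
    (∀ r₀ : ℕ, SMem r m b r₀ → (∀ j : ℕ, SMem r m b j → r₀ ≤ j) →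
      ((∀ j : ℕ, SMem r m b j → r₀ ∣ j) ∧ r₀ ∣ r ∧ r ∣ m * r₀)) :=
  stmt_13_general r m hr b hbper
end

section
/- Let r_0, j_0 be positive integers, r := r_0·j_0, let m be a positive integer divisible by j_0, m_0 := m/j_0, τ_0 := exp(2π√−1/j_0), and q ∈ ℂ∖{0}. Let V := ℂ^r with standard basis e_1,…,e_r and let f be the linear endomorphism with f(e_i) = e_{i+1} for 1 ≤ i ≤ r−1 and f(e_r) = q^m·e_1. For 1 ≤ i ≤ r_0 and 0 ≤ s ≤ j_0−1 set x_i^{(s)} := Σ_{k=0}^{j_0−1} τ_0^{sk}·q^{−k·m_0}·e_{i+k·r_0}. Then f(x_i^{(s)}) = x_{i+1}^{(s)} for 1 ≤ i ≤ r_0−1, f(x_{r_0}^{(s)}) = q^{m_0}·τ_0^{−s}·x_1^{(s)}, and the r vectors x_i^{(s)} (1 ≤ i ≤ r_0, 0 ≤ s ≤ j_0−1) form a basis of ℂ^r. -/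
/-!
For fixed `s` the coefficients of `x_i^{(s)}` form the geometric sequence `a ^ k` with
`a = τ₀ ^ s * q⁻¹ ^ m₀`, and `a ^ j₀ * q ^ m = 1` because `τ₀ ^ j₀ = 1`; hence `f` moves
`x_i^{(s)}` to `x_{i+1}^{(s)}`, and at `i = r₀` the wrap-around `e_r ↦ q ^ m e_1` produces the
factor `a⁻¹`. For fixed `i`, `s ↦ x_i^{(s)}` is a discrete Fourier transform of
`k ↦ q⁻¹ ^ (k m₀) e_{i + k r₀}`, which the orthogonality `∑_s τ₀ ^ (s d) = j₀ [j₀ ∣ d]` inverts;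
so the `x_i^{(s)}` span `ℂ^r`, and there are exactly `r` of them.
-/

open Finset

namespace IsPrimitiveRoot

variable {K M : Type*} [Field K] [AddCommMonoid M] [Module K M] {ζ : K} {n : ℕ}

theorem sum_range_pow_mul_eq_ite (hζ : IsPrimitiveRoot ζ n) (d : ℕ) :
    ∑ s ∈ range n, ζ ^ (s * d) = if n ∣ d then (n : K) else 0 := by
  simp_rw [mul_comm _ d, pow_mul]
  by_cases hd : n ∣ d
  · simp [(hζ.pow_eq_one_iff_dvd d).mpr hd, hd]
  · have hne : ζ ^ d ≠ 1 := mt (hζ.pow_eq_one_iff_dvd d).mp hd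
    rw [geom_sum_eq hne, ← pow_mul, mul_comm, pow_mul, hζ.pow_eq_one, one_pow, sub_self,
      zero_div, if_neg hd]

theorem sum_range_pow_smul_dft (hζ : IsPrimitiveRoot ζ n) (v : ℕ → M) {k : ℕ} (hk : k < n) :
    ∑ s ∈ range n, ζ ^ (s * (n - k)) • ∑ k' ∈ range n, ζ ^ (s * k') • v k' = (n : K) • v k := by
  have hdvd : ∀ k' ∈ range n, n ∣ n - k + k' ↔ k' = k := by
    intro k' hk'
    rw [mem_range] at hk'
    constructor
    · intro h
      have := Nat.eq_of_dvd_of_lt_two_mul (by omega) h (by omega)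
      omega
    · rintro rfl
      exact ⟨1, by omega⟩
  calc _ = ∑ k' ∈ range n, (∑ s ∈ range n, ζ ^ (s * (n - k + k'))) • v k' := by
        simp_rw [smul_sum, smul_smul, ← pow_add, ← mul_add, sum_smul]
        exact sum_comm
    _ = ∑ k' ∈ range n, (if k' = k then (n : K) else 0) • v k' := by
        refine sum_congr rfl fun k' hk' => ?_
        rw [hζ.sum_range_pow_mul_eq_ite, if_congr (hdvd k' hk') rfl rfl]
    _ = (n : K) • v k := by simp [hk]

theorem mem_span_range_dft (hζ : IsPrimitiveRoot ζ n) (v : ℕ → M) (c : ℕ → K) {k : ℕ}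
    (hk : k < n) (hc : c k ≠ 0) :
    v k ∈ Submodule.span K
      (Set.range fun s : Fin n => ∑ k' ∈ range n, (ζ ^ ((s : ℕ) * k') * c k') • v k') := by
  have : NeZero n := ⟨by omega⟩
  have hn : (n : K) ≠ 0 := hζ.neZero'.out
  have hinv := hζ.sum_range_pow_smul_dft (fun k' => c k' • v k') hk
  simp_rw [smul_smul] at hinv
  have hv : v k = ((n : K) * c k)⁻¹ • ∑ s ∈ range n, ζ ^ (s * (n - k)) •
      ∑ k' ∈ range n, (ζ ^ (s * k') * c k') • v k' := by
    rw [hinv, smul_smul, inv_mul_cancel₀ (mul_ne_zero hn hc), one_smul]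
  rw [hv, ← Fin.sum_univ_eq_sum_range]
  exact Submodule.smul_mem _ _ <| Submodule.sum_mem _ fun s _ =>
    Submodule.smul_mem _ _ (Submodule.subset_span ⟨s, rfl⟩)

end IsPrimitiveRoot

section Shift

variable {R M : Type*} [CommSemiring R] [AddCommMonoid M] [Module R M] {f : M →ₗ[R] M}
  {e : ℕ → M} {r j : ℕ}

theorem map_sum_pow_smul_shift (hf : ∀ i, 1 ≤ i → i ≤ r * j - 1 → f (e i) = e (i + 1))
    (a : R) {i : ℕ} (hi : 1 ≤ i) (hir : i < r) :
    f (∑ k ∈ range j, a ^ k • e (i + k * r)) = ∑ k ∈ range j, a ^ k • e (i + 1 + k * r) := by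
  rw [map_sum]
  refine sum_congr rfl fun k hk => ?_
  have hkj : (k + 1) * r ≤ r * j := by
    rw [mul_comm r]; exact Nat.mul_le_mul_right r (mem_range.mp hk)
  rw [map_smul, hf _ (by omega) (by rw [add_mul] at hkj; omega), add_right_comm]

theorem smul_map_sum_pow_smul_wrap (hr : 0 < r)
    (hf : ∀ i, 1 ≤ i → i ≤ r * j - 1 → f (e i) = e (i + 1)) {c a : R}
    (hfe : f (e (r * j)) = c • e 1) (ha : a ^ j * c = 1) :
    a • f (∑ k ∈ range j, a ^ k • e (r + k * r)) = ∑ k ∈ range j, a ^ k • e (1 + k * r) := by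
  cases j with
  | zero => simp
  | succ j =>
    have hr' : r + j * r = r * (j + 1) := by ring
    rw [sum_range_succ, map_add, map_smul, hr', hfe, sum_range_succ', smul_add, smul_smul,
      smul_smul, ← pow_succ', ha, one_smul, pow_zero, one_smul, zero_mul, add_zero]
    congr 1
    rw [map_sum, smul_sum]
    refine sum_congr rfl fun k hk => ?_
    have hkj : k * r + r ≤ j * r := by
      rw [← Nat.succ_mul]; exact Nat.mul_le_mul_right r (mem_range.mp hk)
    rw [map_smul, hf _ (by omega) (by rw [Nat.mul_succ, mul_comm r]; omega), smul_smul,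
      ← pow_succ', show r + k * r + 1 = 1 + (k + 1) * r by ring]

end Shift

theorem stmt_15_general (r₀ j₀ m : ℕ) (hr₀ : 0 < r₀) (hj₀ : 0 < j₀)
    (m₀ : ℕ) (hm₀ : m = j₀ * m₀)
    (τ₀ : ℂ) (hτ₀ : τ₀ = Complex.exp (2 * (Real.pi : ℂ) * Complex.I / j₀))
    (q : ℂ) (hq : q ≠ 0)
    (e : ℕ → Fin (r₀ * j₀) → ℂ)
    (he : ∀ i : Fin (r₀ * j₀), e ((i : ℕ) + 1) = Pi.single i 1)
    (f : (Fin (r₀ * j₀) → ℂ) →ₗ[ℂ] (Fin (r₀ * j₀) → ℂ))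
    (hf1 : ∀ i : ℕ, 1 ≤ i → i ≤ r₀ * j₀ - 1 → f (e i) = e (i + 1))
    (hf2 : f (e (r₀ * j₀)) = q ^ m • e 1)
    (x : ℕ → ℕ → Fin (r₀ * j₀) → ℂ)
    (hx : ∀ i s : ℕ, 1 ≤ i → i ≤ r₀ → s ≤ j₀ - 1 →
      x i s = ∑ k ∈ Finset.range j₀, (τ₀ ^ (s * k) * q⁻¹ ^ (k * m₀)) • e (i + k * r₀)) :
    (∀ s : ℕ, s ≤ j₀ - 1 →
      (∀ i : ℕ, 1 ≤ i → i ≤ r₀ - 1 → f (x i s) = x (i + 1) s) ∧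
      f (x r₀ s) = (q ^ m₀ * τ₀⁻¹ ^ s) • x 1 s) ∧
    LinearIndependent ℂ (fun p : Fin r₀ × Fin j₀ => x ((p.1 : ℕ) + 1) (p.2 : ℕ)) ∧
    Submodule.span ℂ (Set.range (fun p : Fin r₀ × Fin j₀ => x ((p.1 : ℕ) + 1) (p.2 : ℕ)))
      = ⊤ := by
  have hτ : IsPrimitiveRoot τ₀ j₀ := hτ₀ ▸ Complex.isPrimitiveRoot_exp j₀ hj₀.ne'
  have hx_geom : ∀ i s, 1 ≤ i → i ≤ r₀ → s ≤ j₀ - 1 →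
      x i s = ∑ k ∈ range j₀, (τ₀ ^ s * q⁻¹ ^ m₀) ^ k • e (i + k * r₀) := by
    intro i s hi hir hs
    rw [hx i s hi hir hs]
    refine sum_congr rfl fun k _ => ?_
    rw [mul_pow, ← pow_mul, ← pow_mul, mul_comm m₀]
  have hspan : Submodule.span ℂ
      (Set.range fun p : Fin r₀ × Fin j₀ => x ((p.1 : ℕ) + 1) (p.2 : ℕ)) = ⊤ := by
    rw [eq_top_iff, ← (Pi.basisFun ℂ (Fin (r₀ * j₀))).span_eq, Submodule.span_le]
    rintro _ ⟨n, rfl⟩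
    have hk : (n : ℕ) / r₀ < j₀ := Nat.div_lt_of_lt_mul n.isLt
    have hn : (n : ℕ) + 1 = ((n : ℕ) % r₀ + 1) + (n : ℕ) / r₀ * r₀ := by
      rw [add_right_comm, Nat.mod_add_div']
    rw [Pi.basisFun_apply, ← he n, hn]
    refine Submodule.span_mono ?_ <|
      hτ.mem_span_range_dft (fun k => e ((n : ℕ) % r₀ + 1 + k * r₀)) (fun k => q⁻¹ ^ (k * m₀)) hk
        (pow_ne_zero _ (inv_ne_zero hq))
    rintro _ ⟨s, rfl⟩
    exact ⟨(⟨(n : ℕ) % r₀, Nat.mod_lt _ hr₀⟩, s),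
      hx _ _ le_add_self (Nat.mod_lt _ hr₀) (Nat.le_sub_one_of_lt s.isLt)⟩
  refine ⟨fun s hs => ⟨fun i hi hir => ?_, ?_⟩,
    linearIndependent_of_top_le_span_of_card_eq_finrank hspan.ge (by simp), hspan⟩
  · rw [hx_geom i s hi (by omega) hs, hx_geom (i + 1) s (by omega) (by omega) hs,
      map_sum_pow_smul_shift hf1 _ hi (by omega)]
  · have ha : (τ₀ ^ s * q⁻¹ ^ m₀) ^ j₀ * q ^ m = 1 := by
      rw [mul_pow, ← pow_mul, mul_comm s, pow_mul, hτ.pow_eq_one, one_pow, one_mul, ← pow_mul,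
        mul_comm m₀, ← hm₀, inv_pow, inv_mul_cancel₀ (pow_ne_zero _ hq)]
    have ha0 : τ₀ ^ s * q⁻¹ ^ m₀ ≠ 0 :=
      mul_ne_zero (pow_ne_zero _ (hτ.ne_zero hj₀.ne')) (pow_ne_zero _ (inv_ne_zero hq))
    rw [hx_geom 1 s le_rfl hr₀ hs, hx_geom r₀ s hr₀ le_rfl hs,
      ← smul_map_sum_pow_smul_wrap hr₀ hf1 hf2 ha, smul_smul,
      show q ^ m₀ * τ₀⁻¹ ^ s = (τ₀ ^ s * q⁻¹ ^ m₀)⁻¹ by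
        rw [mul_inv, inv_pow, inv_pow, inv_inv, mul_comm],
      inv_mul_cancel₀ ha0, one_smul]

/-- Let `r₀, j₀ ≥ 1`, `r := r₀·j₀`, let `m ≥ 1` be divisible by
`j₀` with `m₀ := m/j₀`, `τ₀ := exp(2π√−1/j₀)`, and `q ≠ 0`.  On `V = ℂ^r` with
standard basis `e 1, …, e r` (1-based: `e (i+1) = Pi.single i 1` for `i : Fin r`),
let `f` be the linear endomorphism with `f(e_i) = e_{i+1}` (`1 ≤ i ≤ r−1`) and
`f(e_r) = q^m·e_1`.  For `1 ≤ i ≤ r₀`, `0 ≤ s ≤ j₀−1` set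
`x_i^{(s)} := Σ_{k=0}^{j₀−1} τ₀^{sk}·q^{−k·m₀}·e_{i+k·r₀}`.  Then
`f(x_i^{(s)}) = x_{i+1}^{(s)}` for `1 ≤ i ≤ r₀−1`,
`f(x_{r₀}^{(s)}) = q^{m₀}·τ₀^{−s}·x_1^{(s)}`, and the `r` vectors `x_i^{(s)}` form a
basis of `ℂ^r`. -/
theorem stmt_15 (r₀ j₀ m : ℕ) (hr₀ : 0 < r₀) (hj₀ : 0 < j₀) (hm : 0 < m)
    (m₀ : ℕ) (hm₀ : m = j₀ * m₀)
    (τ₀ : ℂ) (hτ₀ : τ₀ = Complex.exp (2 * (Real.pi : ℂ) * Complex.I / j₀))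
    (q : ℂ) (hq : q ≠ 0)
    (e : ℕ → Fin (r₀ * j₀) → ℂ)
    (he : ∀ i : Fin (r₀ * j₀), e ((i : ℕ) + 1) = Pi.single i 1)
    (f : (Fin (r₀ * j₀) → ℂ) →ₗ[ℂ] (Fin (r₀ * j₀) → ℂ))
    (hf1 : ∀ i : ℕ, 1 ≤ i → i ≤ r₀ * j₀ - 1 → f (e i) = e (i + 1))
    (hf2 : f (e (r₀ * j₀)) = q ^ m • e 1)
    (x : ℕ → ℕ → Fin (r₀ * j₀) → ℂ)
    (hx : ∀ i s : ℕ, 1 ≤ i → i ≤ r₀ → s ≤ j₀ - 1 →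
      x i s = ∑ k ∈ Finset.range j₀, (τ₀ ^ (s * k) * q⁻¹ ^ (k * m₀)) • e (i + k * r₀)) :
    (∀ s : ℕ, s ≤ j₀ - 1 →
      (∀ i : ℕ, 1 ≤ i → i ≤ r₀ - 1 → f (x i s) = x (i + 1) s) ∧
      f (x r₀ s) = (q ^ m₀ * τ₀⁻¹ ^ s) • x 1 s) ∧
    LinearIndependent ℂ (fun p : Fin r₀ × Fin j₀ => x ((p.1 : ℕ) + 1) (p.2 : ℕ)) ∧
    Submodule.span ℂ (Set.range (fun p : Fin r₀ × Fin j₀ => x ((p.1 : ℕ) + 1) (p.2 : ℕ)))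
      = ⊤ :=
  stmt_15_general r₀ j₀ m hr₀ hj₀ m₀ hm₀ τ₀ hτ₀ q hq e he f hf1 hf2 x hx
end

section
/- Let V be a finite-dimensional complex vector space, C a nondegenerate symmetric ℂ-bilinear form on V, and h a nondegenerate Hermitian form on V (ℂ-linear in the first variable, with h(v,u) equal to the complex conjugate of h(u,v)). For f in the dual space V*, let u_f ∈ V be the unique vector with f(x) = h(x, u_f) for all x ∈ V, and define the Hermitian form h^∨ on V* by h^∨(f,g) := h(u_g, u_f). Assume the compatibility condition: h^∨(C(u,·), C(v,·)) = h(u,v) for all u, v ∈ V. Let κ : V → V be the map sending v to the unique vector κ(v) with h(u,v) = C(u, κ(v)) for all u ∈ V (κ is conjugate-linear). Then κ ∘ κ = id_V. -/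
/-! Comparing `C(u, ·)` on both sides, the compatibility of `h^∨` with `C` says exactly that
`κ v` is the `h`-representative `u_{C(v,·)}` of the functional `C(v,·)`. Hence
`C(u, κ(κ v)) = h(u, κ v) = h(u, u_{C(v,·)}) = C(v, u)`, and nondegeneracy of `C` gives
`κ(κ v) = v`. -/

section

variable {R M : Type*} [CommSemiring R] [AddCommMonoid M] [Module R M]
  {B : M →ₗ[R] M →ₗ[R] R}

theorem eq_of_forall_apply_right_eq_of_injective (hB : Function.Injective B)
    (hsymm : ∀ u v : M, B u v = B v u) {x y : M} (hxy : ∀ u, B u x = B u y) : x = y :=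
  hB <| LinearMap.ext fun u => by rw [← hsymm, hxy, hsymm]

variable (hB : Function.Injective B) (hsymm : ∀ u v : M, B u v = B v u)
  {h : M → M → R} {uvec : (M →ₗ[R] R) → M} (huvec : ∀ (f : M →ₗ[R] R) (x : M), f x = h x (uvec f))
  {κ : M → M} (hκ : ∀ u v : M, h u v = B u (κ v))
include hB hsymm huvec hκ

theorem eq_uvec_of_compat (hcompat : ∀ u v : M, h (uvec (B v)) (uvec (B u)) = h u v) (v : M) :
    κ v = uvec (B v) :=
  eq_of_forall_apply_right_eq_of_injective hB hsymm fun u => by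
    rw [← hκ, ← hcompat, ← huvec, hsymm]

theorem involutive_of_compat (hcompat : ∀ u v : M, h (uvec (B v)) (uvec (B u)) = h u v) (v : M) :
    κ (κ v) = v :=
  eq_of_forall_apply_right_eq_of_injective hB hsymm fun u => by
    rw [← hκ, eq_uvec_of_compat hB hsymm huvec hκ hcompat, ← huvec, hsymm]

end

theorem stmt_17_general (V : Type*) [AddCommGroup V] [Module ℂ V]
    (Cb : V →ₗ[ℂ] V →ₗ[ℂ] ℂ)
    (hCsymm : ∀ u v : V, Cb u v = Cb v u)
    (hCnd : Function.Bijective fun u : V => Cb u)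
    (h : V → V → ℂ)
    (uvec : (V →ₗ[ℂ] ℂ) → V)
    (huvec : ∀ (f : V →ₗ[ℂ] ℂ) (x : V), f x = h x (uvec f))
    (hcompat : ∀ u v : V, h (uvec (Cb v)) (uvec (Cb u)) = h u v)
    (κ : V → V)
    (hκ : ∀ u v : V, h u v = Cb u (κ v)) :
    ∀ v : V, κ (κ v) = v :=
  involutive_of_compat hCnd.injective hCsymm huvec hκ hcompat

/-- Let `V` be a finite-dimensional complex vector space, `Cb` a
nondegenerate symmetric `ℂ`-bilinear form on `V` (nondegenerate: the induced map
`V → V*`, `u ↦ Cb u`, is bijective), and `h` a nondegenerate Hermitian form on `V`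
(`ℂ`-linear in the first variable, `h v u = conj (h u v)`).  For `f ∈ V*`, let
`uvec f ∈ V` be the (unique) vector with `f x = h x (uvec f)` for all `x`, and
define `h^∨` on `V*` by `h^∨(f,g) := h (uvec g) (uvec f)`.  Assume the
compatibility `h^∨(Cb u, Cb v) = h u v`, i.e. `h (uvec (Cb v)) (uvec (Cb u)) = h u v`
for all `u, v`.  Let `κ : V → V` be the map with `h u v = Cb u (κ v)` for all
`u, v`.  Then `κ ∘ κ = id`. -/
theorem stmt_17 (V : Type*) [AddCommGroup V] [Module ℂ V] [FiniteDimensional ℂ V]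
    (Cb : V →ₗ[ℂ] V →ₗ[ℂ] ℂ)
    (hCsymm : ∀ u v : V, Cb u v = Cb v u)
    (hCnd : Function.Bijective fun u : V => Cb u)
    (h : V → V → ℂ)
    (hadd : ∀ u u' v : V, h (u + u') v = h u v + h u' v)
    (hsmul : ∀ (a : ℂ) (u v : V), h (a • u) v = a * h u v)
    (hconj : ∀ u v : V, h v u = starRingEnd ℂ (h u v))
    (hnd : ∀ u : V, (∀ v : V, h u v = 0) → u = 0)
    (uvec : (V →ₗ[ℂ] ℂ) → V)
    (huvec : ∀ (f : V →ₗ[ℂ] ℂ) (x : V), f x = h x (uvec f))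
    (hcompat : ∀ u v : V, h (uvec (Cb v)) (uvec (Cb u)) = h u v)
    (κ : V → V)
    (hκ : ∀ u v : V, h u v = Cb u (κ v)) :
    ∀ v : V, κ (κ v) = v :=
  stmt_17_general V Cb hCsymm hCnd h uvec huvec hcompat κ hκ
end
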